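/- arXiv:quant-ph/0405013 — 7 statements merged into one kernel-verified Lean document; each statement's English description precedes it below -/
import Mathlib

section
/- Let a_0, T be integers and k a positive integer such that 2k does not divide T. Consider the 2k/gcd(T,2k) consecutive elements a_j = a_0 + j·T of the arithmetic progression, for j in any block of 2k/gcd(T,2k) consecutive indices, and set b_j = ⌊a_j/k⌋ mod 2 (floor division of integers). Then at least ⌊k/gcd(T,2k)⌋ of the integers b_j are equal to 0, and at least ⌊k/gcd(T,2k)⌋ of them are equal to 1. -/
lemma arith_aux (a0 T : ℤ) (k : ℕ) (hk : 0 < k) (j0 : ℤ) :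
    (k / Int.gcd T (2 * k) : ℕ) ≤
      ((Finset.Ico j0 (j0 + (2 * k / Int.gcd T (2 * k) : ℕ))).filter
        (fun j => ((a0 + j * T).fdiv (k : ℤ)) % 2 = 0)).card := by
  set G : ℕ := Int.gcd T (2 * k) with hGdef
  have h2k : (0:ℤ) < 2 * (k:ℤ) := by positivity
  have hGpos : 0 < G := Int.gcd_pos_iff.mpr (Or.inr (by exact_mod_cast h2k.ne'))
  have hg2k : ((G:ℤ)) ∣ 2 * (k:ℤ) := Int.gcd_dvd_right _ _
  have hgT : ((G:ℤ)) ∣ T := Int.gcd_dvd_left _ _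
  obtain ⟨t', ht'⟩ := hgT
  have hGdvd : G ∣ 2 * k := by exact_mod_cast hg2k
  set N : ℕ := 2 * k / G with hNdef
  have hNpos : 0 < N := Nat.div_pos (Nat.le_of_dvd (by omega) hGdvd) hGpos
  have hNg : (N : ℤ) * (G:ℤ) = 2 * (k:ℤ) := by
    have := Nat.div_mul_cancel hGdvd
    exact_mod_cast this
  set M : ℕ := k / G with hMdef
  have hMg : (M : ℤ) * (G:ℤ) ≤ (k:ℤ) := by exact_mod_cast Nat.div_mul_le_self k G
  have hMN : M ≤ N := Nat.div_le_div_right (by omega)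
  have hbez : ((G:ℤ)) = T * Int.gcdA T (2*k) + 2*(k:ℤ) * Int.gcdB T (2*k) := by
    have := Int.gcd_eq_gcd_ab T (2*(k:ℤ))
    push_cast at this ⊢
    convert this using 3
  set u := Int.gcdA T (2*(k:ℤ)) with hu
  set v := Int.gcdB T (2*(k:ℤ)) with hv
  set r0 := a0 % (G:ℤ) with hr0def
  have hr0 : 0 ≤ r0 := Int.emod_nonneg a0 (by exact_mod_cast hGpos.ne')
  have hr0g : r0 < (G:ℤ) := Int.emod_lt_of_pos a0 (by exact_mod_cast hGpos)
  set q := a0 / (G:ℤ) with hq0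
  have hq : a0 = (G:ℤ) * q + r0 := (Int.mul_ediv_add_emod a0 (G:ℤ)).symm
  -- the map
  set f : ℕ → ℤ := fun m => j0 + (u * ((m:ℤ) - q) - j0) % (N:ℤ) with hf
  have hNZ : ((N:ℤ)) ≠ 0 := by exact_mod_cast hNpos.ne'
  have key : ∀ m : ℕ, ∃ c : ℤ, a0 + f m * T = r0 + (m:ℤ) * (G:ℤ) + 2 * (k:ℤ) * c := by
    intro m
    refine ⟨-(v * ((m:ℤ) - q) + ((u * ((m:ℤ) - q) - j0) / (N:ℤ)) * t'), ?_⟩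
    have hw : (u * ((m:ℤ) - q) - j0) % (N:ℤ)
        = u * ((m:ℤ) - q) - j0 - (N:ℤ) * ((u * ((m:ℤ) - q) - j0) / (N:ℤ)) :=
      Int.emod_def _ _
    show a0 + (j0 + (u * ((m:ℤ) - q) - j0) % (N:ℤ)) * T = _
    rw [hw]
    linear_combination hq - ((m:ℤ) - q) * hbez
      - (N:ℤ) * ((u * ((m:ℤ) - q) - j0) / (N:ℤ)) * ht'
      - ((u * ((m:ℤ) - q) - j0) / (N:ℤ)) * t' * hNg
  have hfmem : ∀ m : ℕ, f m ∈ Finset.Ico j0 (j0 + (N:ℤ)) := by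
    intro m
    have h1 : 0 ≤ (u * ((m:ℤ) - q) - j0) % (N:ℤ) := Int.emod_nonneg _ hNZ
    have h2 : (u * ((m:ℤ) - q) - j0) % (N:ℤ) < (N:ℤ) :=
      Int.emod_lt_of_pos _ (by exact_mod_cast hNpos)
    simp only [Finset.mem_Ico, hf]
    omega
  have hbound : ∀ m : ℕ, m < M → 0 ≤ r0 + (m:ℤ) * (G:ℤ) ∧ r0 + (m:ℤ) * (G:ℤ) < (k:ℤ) := by
    intro m hm
    constructor
    · positivity
    · have hm' : (m:ℤ) + 1 ≤ (M:ℤ) := by exact_mod_cast hm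
      nlinarith [mul_le_mul_of_nonneg_right hm' (by positivity : (0:ℤ) ≤ (G:ℤ))]
  have hpred : ∀ m : ℕ, m < M → ((a0 + f m * T).fdiv (k:ℤ)) % 2 = 0 := by
    intro m hm
    obtain ⟨c, hc⟩ := key m
    obtain ⟨h0, h1⟩ := hbound m hm
    rw [Int.fdiv_eq_ediv_of_nonneg _ (by positivity)]
    have : a0 + f m * T = (r0 + (m:ℤ) * (G:ℤ)) + (2*c) * (k:ℤ) := by linarith
    rw [this, Int.add_mul_ediv_right _ _ (by exact_mod_cast hk.ne')]
    rw [Int.ediv_eq_zero_of_lt h0 h1]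
    omega
  -- injectivity
  have hinj : Set.InjOn f (Finset.range M) := by
    intro m1 hm1 m2 hm2 hfe
    simp only [Finset.coe_range, Set.mem_Iio] at hm1 hm2
    obtain ⟨c1, hc1⟩ := key m1
    obtain ⟨c2, hc2⟩ := key m2
    rw [hfe] at hc1
    have hGne : (0:ℤ) < (G:ℤ) := by exact_mod_cast hGpos
    have heq : ((m1:ℤ) - m2) * (G:ℤ) = ((N:ℤ) * (c2 - c1)) * (G:ℤ) := by
      linear_combination hc2 - hc1 + (c1 - c2) * hNg
    have heq2 : ((m1:ℤ) - m2) = (N:ℤ) * (c2 - c1) := by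
      exact mul_right_cancel₀ hGne.ne' heq
    have habs : |(m1:ℤ) - m2| < (N:ℤ) := by
      rw [abs_lt]
      have : (m1:ℤ) < M := by exact_mod_cast hm1
      have : (m2:ℤ) < M := by exact_mod_cast hm2
      have : (M:ℤ) ≤ N := by exact_mod_cast hMN
      omega
    have : (m1:ℤ) - m2 = 0 := Int.eq_zero_of_abs_lt_dvd ⟨_, heq2⟩ habs
    omega
  refine le_trans (le_of_eq (Finset.card_range M).symm)
    (Finset.card_le_card_of_injOn f ?_ hinj)
  intro m hm
  rw [Finset.mem_coe, Finset.mem_filter]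
  exact ⟨hfmem m, hpred m (Finset.mem_range.mp hm)⟩

/-- Lemma 2 (arithmetic progressions): if `2k ∤ T`, then among any
`2k/gcd(T,2k)` consecutive elements `a_j = a_0 + j·T` of the arithmetic progression,
setting `b_j = ⌊a_j/k⌋ mod 2`, at least `⌊k/gcd(T,2k)⌋` of the `b_j` are `0` and at
least `⌊k/gcd(T,2k)⌋` of them are `1`. -/
theorem arith_progr_lower (a0 T : ℤ) (k : ℕ) (hk : 0 < k)
    (hdvd : ¬ ((2 * (k : ℤ)) ∣ T)) (j0 : ℤ) :
    (k / Int.gcd T (2 * k) : ℕ) ≤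
      ((Finset.Ico j0 (j0 + (2 * k / Int.gcd T (2 * k) : ℕ))).filter
        (fun j => ((a0 + j * T).fdiv (k : ℤ)) % 2 = 0)).card ∧
    (k / Int.gcd T (2 * k) : ℕ) ≤
      ((Finset.Ico j0 (j0 + (2 * k / Int.gcd T (2 * k) : ℕ))).filter
        (fun j => ((a0 + j * T).fdiv (k : ℤ)) % 2 = 1)).card := by
  refine ⟨arith_aux a0 T k hk j0, ?_⟩
  have h := arith_aux (a0 + k) T k hk j0
  have heq : ((Finset.Ico j0 (j0 + ((2 * k / Int.gcd T (2 * k) : ℕ) : ℤ))).filter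
        (fun j => (((a0 + k) + j * T).fdiv (k : ℤ)) % 2 = 0))
      = ((Finset.Ico j0 (j0 + ((2 * k / Int.gcd T (2 * k) : ℕ) : ℤ))).filter
        (fun j => ((a0 + j * T).fdiv (k : ℤ)) % 2 = 1)) := by
    apply Finset.filter_congr
    intro j _
    have hkne : (k:ℤ) ≠ 0 := by positivity
    have h1 : (a0 + (k:ℤ) + j * T) = (a0 + j * T) + 1 * (k:ℤ) := by ring
    rw [Int.fdiv_eq_ediv_of_nonneg _ (by positivity), Int.fdiv_eq_ediv_of_nonneg _ (by positivity), h1,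
      Int.add_mul_ediv_right _ _ hkne]
    omega
  rw [heq] at h
  exact h
end

section
/- Let a_0, T be integers and k a positive integer such that 2k does not divide T. Consider any p consecutive elements a_j = a_0 + j·T of the arithmetic progression (j ranging over a block of p consecutive indices), and set b_j = ⌊a_j/k⌋ mod 2. Then at least ⌊k/gcd(T,2k)⌋·⌊p·gcd(T,2k)/(2k)⌋ of the integers b_j are equal to 0, and at least the same number of them are equal to 1. -/
/-- Exactly one element of each residue class mod `g` in an interval of length `g`. -/
private lemma mod_singleton (g c v : ℤ) (hg : 0 < g) :
    ((Finset.Ico c (c + g)).filter (fun x => x % g = v % g)) = {c + (v - c) % g} := by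
  have hb1 : 0 ≤ (v - c) % g := Int.emod_nonneg _ hg.ne'
  have hb2 : (v - c) % g < g := Int.emod_lt_of_pos _ hg
  have h4 : (c + (v - c) % g) % g = v % g := by
    conv_rhs => rw [show v = c + (v - c) by ring]
    rw [Int.add_emod, Int.emod_emod_of_dvd _ dvd_rfl, ← Int.add_emod]
  ext x
  simp only [Finset.mem_filter, Finset.mem_Ico, Finset.mem_singleton]
  constructor
  · rintro ⟨⟨h1, h2⟩, h3⟩
    have hd : g ∣ (c + (v - c) % g) - x := Int.ModEq.dvd (h3.trans h4.symm)
    rcases hd with ⟨t, ht⟩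
    have ht0 : t = 0 := by
      rcases lt_trichotomy t 0 with h | h | h
      · nlinarith
      · exact h
      · nlinarith
    rw [ht0, mul_zero] at ht
    linarith
  · rintro rfl
    exact ⟨⟨by linarith, by linarith⟩, h4⟩

private lemma mod_count_exact (g v : ℤ) (hg : 0 < g) (c : ℤ) (n : ℕ) :
    ((Finset.Ico c (c + g * n)).filter (fun x => x % g = v % g)).card = n := by
  induction n generalizing c with
  | zero => simp
  | succ n ih =>
    have hsplit : Finset.Ico c (c + g * (n + 1 : ℕ)) =
        Finset.Ico c (c + g) ∪ Finset.Ico (c + g) ((c + g) + g * n) := by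
      rw [Finset.Ico_union_Ico_eq_Ico (by linarith) (by nlinarith [Int.natCast_nonneg n])]
      · push_cast; ring_nf
    rw [hsplit, Finset.filter_union,
      Finset.card_union_of_disjoint
        (Finset.disjoint_filter_filter (Finset.Ico_disjoint_Ico_consecutive _ _ _)),
      mod_singleton g c v hg, ih (c + g), Finset.card_singleton, Nat.add_comm]

private lemma mod_count_lower (g : ℕ) (hg : 0 < g) (v c : ℤ) (len : ℕ) :
    len / g ≤ ((Finset.Ico c (c + (len : ℤ))).filter (fun x => x % (g : ℤ) = v % g)).card := by
  have hg' : (0:ℤ) < g := by exact_mod_cast hg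
  have h := mod_count_exact (g : ℤ) v hg' c (len / g)
  have hsub : Finset.Ico c (c + (g:ℤ) * (len / g : ℕ)) ⊆ Finset.Ico c (c + (len:ℤ)) := by
    apply Finset.Ico_subset_Ico le_rfl
    have : (g : ℤ) * ((len / g : ℕ) : ℤ) ≤ len := by
      exact_mod_cast Nat.cast_le.mpr (Nat.mul_div_le len g)
    linarith
  calc len / g = _ := h.symm
    _ ≤ _ := Finset.card_le_card (Finset.filter_subset_filter _ hsub)

private lemma fdiv_mod_two (a : ℤ) (k : ℕ) (hk : 0 < k) :
    (a.fdiv k % 2 = 0 ↔ a % (2 * k) < k) ∧ (a.fdiv k % 2 = 1 ↔ (k:ℤ) ≤ a % (2 * k)) := by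
  have hk' : (0:ℤ) < k := by exact_mod_cast hk
  have h2k : (0:ℤ) < 2 * k := by linarith
  set r := a % (2 * (k:ℤ)) with hr
  have hr0 : 0 ≤ r := Int.emod_nonneg _ h2k.ne'
  have hr2 : r < 2 * k := Int.emod_lt_of_pos _ h2k
  have ha : a = 2 * k * (a / (2 * k)) + r := by
    rw [hr]; exact (Int.mul_ediv_add_emod a (2 * k)).symm
  have hq : a / (k:ℤ) = r / k + 2 * (a / (2 * (k:ℤ))) := by
    conv_lhs => rw [ha, show 2 * (k:ℤ) * (a / (2 * k)) + r = r + (k:ℤ) * (2 * (a / (2 * k))) by ring]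
    rw [Int.add_mul_ediv_left _ _ hk'.ne']
  have hmod : a.fdiv k % 2 = r / k % 2 := by
    rw [Int.fdiv_eq_ediv_of_nonneg a hk'.le, hq, Int.add_mul_emod_self_left]
  by_cases hc : r < k
  · have h0 : r / (k:ℤ) = 0 := Int.ediv_eq_zero_of_lt hr0 hc
    rw [hmod, h0]
    norm_num
    exact hc
  · push_neg at hc
    have h1 : r / (k:ℤ) = 1 := by
      have h2 : (r - k) / (k:ℤ) = 0 := Int.ediv_eq_zero_of_lt (by linarith) (by linarith)
      have : r / (k:ℤ) = (r - k) / k + 1 := by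
        conv_lhs => rw [show r = (r - k) + (k:ℤ) * 1 by ring]
        rw [Int.add_mul_ediv_left _ _ hk'.ne']
      rw [this, h2]; norm_num
    rw [hmod, h1]
    norm_num
    exact hc

private lemma block_inj (a0 T : ℤ) (k g m : ℕ) (hk : 0 < k) (hg : 0 < g)
    (hgT : (g:ℤ) ∣ T) (hgm : (g:ℤ) * m = 2 * k)
    (hcop : Int.gcd (T / g) m = 1) (s : ℤ) :
    Set.InjOn (fun j => (a0 + j * T) % (2 * (k:ℤ))) (Finset.Ico s (s + (m:ℤ))) := by
  have hk' : (0:ℤ) < k := by exact_mod_cast hk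
  have hg' : (0:ℤ) < g := by exact_mod_cast hg
  intro j1 hj1 j2 hj2 h
  simp only [Finset.coe_Ico, Set.mem_Ico] at hj1 hj2
  have hmodeq : (a0 + j1 * T) ≡ (a0 + j2 * T) [ZMOD 2 * (k:ℤ)] := h
  have hdvd1 : (2 * (k:ℤ)) ∣ (j2 - j1) * T := by
    have := hmodeq.dvd
    have e : a0 + j2 * T - (a0 + j1 * T) = (j2 - j1) * T := by ring
    rwa [e] at this
  rw [← hgm] at hdvd1
  have hT : T = g * (T / g) := (Int.ediv_mul_cancel hgT).symm.trans (mul_comm _ _)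
  have hdvd2 : (m:ℤ) ∣ (j2 - j1) * (T / g) := by
    rcases hdvd1 with ⟨t, ht⟩
    refine ⟨t, ?_⟩
    have : (g:ℤ) * ((j2 - j1) * (T / g)) = (g:ℤ) * ((m:ℤ) * t) := by
      rw [show (g:ℤ) * ((j2 - j1) * (T / g)) = (j2 - j1) * ((g:ℤ) * (T/g)) by ring, ← hT]
      rw [ht]; ring
    exact mul_left_cancel₀ hg'.ne' this
  have hcop' : IsCoprime ((m:ℤ)) (T / g) := by
    have := Int.isCoprime_iff_gcd_eq_one.mpr hcop
    exact this.symm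
  have hdvd3 : (m:ℤ) ∣ (j2 - j1) := hcop'.dvd_of_dvd_mul_right hdvd2
  rcases hdvd3 with ⟨t, ht⟩
  have ht0 : t = 0 := by
    rcases lt_trichotomy t 0 with hlt | h0 | hgt
    · nlinarith [hj1.1, hj1.2, hj2.1, hj2.2]
    · exact h0
    · nlinarith [hj1.1, hj1.2, hj2.1, hj2.2]
  have : j2 - j1 = 0 := by rw [ht, ht0, mul_zero]
  linarith

private lemma block_image (a0 T : ℤ) (k g m : ℕ) (hk : 0 < k) (hg : 0 < g)
    (hgT : (g:ℤ) ∣ T) (hgm : (g:ℤ) * m = 2 * k)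
    (hcop : Int.gcd (T / g) m = 1) (s : ℤ) :
    (Finset.Ico s (s + (m:ℤ))).image (fun j => (a0 + j * T) % (2 * k))
      = (Finset.Ico 0 (2 * (k:ℤ))).filter (fun x => x % g = a0 % g) := by
  have hk' : (0:ℤ) < k := by exact_mod_cast hk
  have hg' : (0:ℤ) < g := by exact_mod_cast hg
  have h2k : (0:ℤ) < 2 * k := by linarith
  have hg2k : (g:ℤ) ∣ 2 * k := ⟨m, hgm.symm⟩
  have hinj := block_inj a0 T k g m hk hg hgT hgm hcop s
  apply Finset.eq_of_subset_of_card_le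
  · intro x hx
    simp only [Finset.mem_image] at hx
    rcases hx with ⟨j, _, rfl⟩
    simp only [Finset.mem_filter, Finset.mem_Ico]
    refine ⟨⟨Int.emod_nonneg _ h2k.ne', Int.emod_lt_of_pos _ h2k⟩, ?_⟩
    rw [Int.emod_emod_of_dvd _ hg2k, Int.add_emod, Int.emod_eq_zero_of_dvd (Dvd.dvd.mul_left hgT j)]
    simp [Int.emod_emod_of_dvd]
  · have hcard1 : ((Finset.Ico s (s + (m:ℤ))).image (fun j => (a0 + j * T) % (2 * k))).card = m := by
      rw [Finset.card_image_of_injOn hinj, Int.card_Ico]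
      simp
    have hcard2 : ((Finset.Ico 0 (2 * (k:ℤ))).filter (fun x => x % g = a0 % g)).card = m := by
      have := mod_count_exact (g:ℤ) a0 hg' 0 m
      rw [zero_add, hgm] at this
      exact this
    rw [hcard1, hcard2]


private lemma block_bounds (a0 T : ℤ) (k g m : ℕ) (hk : 0 < k) (hg : 0 < g)
    (hgT : (g:ℤ) ∣ T) (hgm : (g:ℤ) * m = 2 * k)
    (hcop : Int.gcd (T / g) m = 1) (s : ℤ) :
    k / g ≤ ((Finset.Ico s (s + (m:ℤ))).filter
        (fun j => (a0 + j * T) % (2 * k) < k)).card ∧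
    k / g ≤ ((Finset.Ico s (s + (m:ℤ))).filter
        (fun j => (k:ℤ) ≤ (a0 + j * T) % (2 * k))).card := by
  have hk' : (0:ℤ) < k := by exact_mod_cast hk
  have hg' : (0:ℤ) < g := by exact_mod_cast hg
  have himg := block_image a0 T k g m hk hg hgT hgm hcop s
  have hinj := block_inj a0 T k g m hk hg hgT hgm hcop s
  have key : ∀ (P : ℤ → Prop) [DecidablePred P],
      ((Finset.Ico s (s + (m:ℤ))).filter (fun j => P ((a0 + j * T) % (2 * k)))).card
        = (((Finset.Ico 0 (2 * (k:ℤ))).filter (fun x => x % g = a0 % g)).filter P).card := by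
    intro P _
    rw [← himg, Finset.filter_image,
      Finset.card_image_of_injOn (hinj.mono (Finset.coe_subset.mpr (Finset.filter_subset _ _)))]
  constructor
  · rw [key (fun x => x < k)]
    rw [Finset.filter_comm, Finset.Ico_filter_lt_of_le_right (by linarith)]
    have := mod_count_lower g hg a0 0 k
    rwa [zero_add] at this
  · rw [key (fun x => (k:ℤ) ≤ x)]
    rw [Finset.filter_comm, Finset.Ico_filter_le_of_left_le (by linarith)]
    have := mod_count_lower g hg a0 (k:ℤ) k
    rwa [show (k:ℤ) + (k:ℤ) = 2 * k by ring] at this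

private lemma acc_count (c : ℤ → Prop) [DecidablePred c] (m n : ℕ) (j0 : ℤ)
    (hblock : ∀ s : ℤ, n ≤ ((Finset.Ico s (s + (m:ℤ))).filter c).card) :
    ∀ q : ℕ, q * n ≤ ((Finset.Ico j0 (j0 + ((q * m : ℕ) : ℤ))).filter c).card := by
  intro q
  induction q with
  | zero => simp
  | succ q ih =>
    have hsplit : Finset.Ico j0 (j0 + (((q+1) * m : ℕ) : ℤ)) =
        Finset.Ico j0 (j0 + ((q * m : ℕ) : ℤ)) ∪
          Finset.Ico (j0 + ((q * m : ℕ) : ℤ)) ((j0 + ((q * m : ℕ) : ℤ)) + (m:ℤ)) := by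
      rw [Finset.Ico_union_Ico_eq_Ico (le_add_of_nonneg_right (by positivity)) (by push_cast; linarith)]
      congr 1
      push_cast; ring
    rw [hsplit, Finset.filter_union,
      Finset.card_union_of_disjoint
        (Finset.disjoint_filter_filter (Finset.Ico_disjoint_Ico_consecutive _ _ _))]
    have := hblock (j0 + ((q * m : ℕ) : ℤ))
    have e : (q + 1) * n = q * n + n := by ring
    omega

/-- Corollary (lower count): if `2k ∤ T`, then among any `p` consecutive elements
`a_j = a_0 + j·T` of the arithmetic progression, setting `b_j = ⌊a_j/k⌋ mod 2`,
at least `⌊k/gcd(T,2k)⌋·⌊p·gcd(T,2k)/(2k)⌋` of the `b_j` are `0`, and at least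
the same number of them are `1`. -/
theorem arith_progr_block_lower (a0 T : ℤ) (k : ℕ) (hk : 0 < k)
    (hdvd : ¬ ((2 * (k : ℤ)) ∣ T)) (j0 : ℤ) (p : ℕ) :
    (k / Int.gcd T (2 * k)) * (p * Int.gcd T (2 * k) / (2 * k)) ≤
      ((Finset.Ico j0 (j0 + (p : ℤ))).filter
        (fun j => ((a0 + j * T).fdiv (k : ℤ)) % 2 = 0)).card ∧
    (k / Int.gcd T (2 * k)) * (p * Int.gcd T (2 * k) / (2 * k)) ≤
      ((Finset.Ico j0 (j0 + (p : ℤ))).filter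
        (fun j => ((a0 + j * T).fdiv (k : ℤ)) % 2 = 1)).card := by
  set g : ℕ := Int.gcd T (2 * k) with hgdef
  have hk' : (0:ℤ) < k := by exact_mod_cast hk
  have h2k : (0:ℤ) < 2 * k := by linarith
  have hg : 0 < g := Int.gcd_pos_iff.mpr (Or.inr h2k.ne')
  have hg' : (0:ℤ) < g := by exact_mod_cast hg
  have hgT : (g:ℤ) ∣ T := Int.gcd_dvd_left _ _
  have hg2k : (g:ℤ) ∣ 2 * (k:ℤ) := Int.gcd_dvd_right _ _
  have hg2kN : g ∣ 2 * k := by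
    have := hg2k
    rw [show (2 * (k:ℤ)) = ((2 * k : ℕ) : ℤ) by push_cast; ring] at this
    exact_mod_cast this
  set m : ℕ := 2 * k / g with hmdef
  have hgm : (g:ℤ) * m = 2 * k := by
    have : g * m = 2 * k := Nat.mul_div_cancel' hg2kN
    exact_mod_cast this
  have hcop : Int.gcd (T / g) m = 1 := by
    have h := Int.gcd_div_gcd_div_gcd (i := T) (j := 2 * k) (by exact_mod_cast hg)
    have e : (2 * (k:ℤ)) / (Int.gcd T (2*k) : ℤ) = (m:ℤ) := by
      rw [← hgdef, ← hgm, Int.mul_ediv_cancel_left _ hg'.ne']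
    rw [e] at h
    exact h
  -- convert predicates
  have hpred0 : ∀ j : ℤ, ((a0 + j * T).fdiv (k:ℤ)) % 2 = 0 ↔ (a0 + j * T) % (2 * k) < k :=
    fun j => (fdiv_mod_two (a0 + j * T) k hk).1
  have hpred1 : ∀ j : ℤ, ((a0 + j * T).fdiv (k:ℤ)) % 2 = 1 ↔ (k:ℤ) ≤ (a0 + j * T) % (2 * k) :=
    fun j => (fdiv_mod_two (a0 + j * T) k hk).2
  set q : ℕ := p / m with hqdef
  have hN : p * g / (2 * k) = q := by
    conv_lhs => rw [show 2 * k = m * g by rw [hmdef, Nat.div_mul_cancel hg2kN]]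
    rw [Nat.mul_div_mul_right _ _ hg]
  have hqm : q * m ≤ p := Nat.div_mul_le_self p m
  have hsub : Finset.Ico j0 (j0 + ((q * m : ℕ) : ℤ)) ⊆ Finset.Ico j0 (j0 + (p : ℤ)) :=
    Finset.Ico_subset_Ico le_rfl (by push_cast; exact_mod_cast add_le_add_right (by exact_mod_cast Nat.cast_le.mpr hqm : ((q*m:ℕ):ℤ) ≤ (p:ℤ)) j0)
  have hblocks := fun s => block_bounds a0 T k g m hk hg hgT hgm hcop s
  rw [hN]
  constructor
  · have hacc := acc_count (fun j => (a0 + j * T) % (2 * (k:ℤ)) < k) m (k / g) j0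
      (fun s => (hblocks s).1) q
    calc k / g * q = q * (k / g) := Nat.mul_comm _ _
      _ ≤ ((Finset.Ico j0 (j0 + ((q * m : ℕ) : ℤ))).filter
            (fun j => (a0 + j * T) % (2 * (k:ℤ)) < k)).card := hacc
      _ ≤ ((Finset.Ico j0 (j0 + (p : ℤ))).filter
            (fun j => (a0 + j * T) % (2 * (k:ℤ)) < k)).card :=
          Finset.card_le_card (Finset.filter_subset_filter _ hsub)
      _ = _ := by
          congr 1
          exact (Finset.filter_congr (fun j _ => by
            simp only [hpred0 j])).symm
  · have hacc := acc_count (fun j => (k:ℤ) ≤ (a0 + j * T) % (2 * (k:ℤ))) m (k / g) j0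
      (fun s => (hblocks s).2) q
    calc k / g * q = q * (k / g) := Nat.mul_comm _ _
      _ ≤ ((Finset.Ico j0 (j0 + ((q * m : ℕ) : ℤ))).filter
            (fun j => (k:ℤ) ≤ (a0 + j * T) % (2 * (k:ℤ)))).card := hacc
      _ ≤ ((Finset.Ico j0 (j0 + (p : ℤ))).filter
            (fun j => (k:ℤ) ≤ (a0 + j * T) % (2 * (k:ℤ)))).card :=
          Finset.card_le_card (Finset.filter_subset_filter _ hsub)
      _ = _ := by
          congr 1
          exact (Finset.filter_congr (fun j _ => by
            simp only [hpred1 j])).symm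
end

section
/- Let a_0, T be integers and k a positive integer such that 2k does not divide T. Consider any p consecutive elements a_j = a_0 + j·T of the arithmetic progression (j ranging over a block of p consecutive indices), and set b_j = ⌊a_j/k⌋ mod 2. Then at most (2k/gcd(T,2k) − ⌊k/gcd(T,2k)⌋)·(⌊p·gcd(T,2k)/(2k)⌋ + 1) of the integers b_j are equal to 0, and at most the same number of them are equal to 1. -/
private lemma ediv_two_eq (a : ℤ) (k : ℕ) (hk : 0 < k) :
    (a / (k:ℤ)) % 2 = (a % (2*(k:ℤ))) / k := by
  have hk' : (0:ℤ) < k := by exact_mod_cast hk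
  have h2k : (0:ℤ) < 2*k := by linarith
  have hr0 : 0 ≤ a % (2*(k:ℤ)) := Int.emod_nonneg a (ne_of_gt h2k)
  have hr2 : a % (2*(k:ℤ)) < 2*k := Int.emod_lt_of_pos a h2k
  set r := a % (2*(k:ℤ)) with hrdef
  set q := a / (2*(k:ℤ)) with hqdef
  have ha : a = r + 2*q*k := by
    have := Int.mul_ediv_add_emod a (2*k)
    rw [← hrdef, ← hqdef] at this; linarith
  have h1 : a / (k:ℤ) = r / k + 2*q := by
    rw [ha, Int.add_mul_ediv_right _ _ (ne_of_gt hk')]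
  have hrk0 : 0 ≤ r / (k:ℤ) := Int.ediv_nonneg hr0 (le_of_lt hk')
  have hrk2 : r / (k:ℤ) < 2 := (Int.ediv_lt_iff_lt_mul hk').mpr (by linarith)
  rw [h1, Int.add_mul_emod_self_left, Int.emod_eq_of_lt hrk0 hrk2]

private lemma count_res (a c : ℤ) (L d : ℕ) (hd : 0 < d) :
    ((Finset.Ico a (a + (L:ℤ))).filter (fun r => r % (d:ℤ) = c)).card ≤ (L + d - 1)/d := by
  set N := (L + d - 1)/d with hN
  have hNd : L ≤ N * d := by
    rcases Nat.eq_zero_or_pos L with hL | hL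
    · exact hL ▸ Nat.zero_le _
    · have hN1 : N = (L-1)/d + 1 := by
        rw [hN, show L + d - 1 = (L-1) + d by omega, Nat.add_div_right _ hd]
      have hlt : L - 1 < ((L-1)/d + 1) * d :=
        (Nat.div_lt_iff_lt_mul hd).mp (Nat.lt_succ_self _)
      rw [hN1]
      exact Nat.le_of_pred_lt hlt
  have hd' : (0:ℤ) < d := by exact_mod_cast hd
  have := Finset.card_range N
  rw [← Finset.card_range N]
  apply Finset.card_le_card_of_injOn (fun r => ((r - a)/(d:ℤ)).toNat)
  · intro r hr
    simp only [Finset.mem_coe, Finset.mem_filter, Finset.mem_Ico] at hr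
    obtain ⟨⟨h1, h2⟩, _⟩ := hr
    simp only [Finset.mem_coe, Finset.mem_range]
    have hlt : (r - a)/(d:ℤ) < N := by
      rw [Int.ediv_lt_iff_lt_mul hd']
      have : (L:ℤ) ≤ (N:ℤ) * d := by exact_mod_cast hNd
      linarith
    have h0 : 0 ≤ (r-a)/(d:ℤ) := Int.ediv_nonneg (by linarith) (le_of_lt hd')
    omega
  · intro r1 h1 r2 h2 heq
    simp only [Finset.coe_filter, Set.mem_setOf_eq, Finset.mem_Ico] at h1 h2
    obtain ⟨⟨ha1, _⟩, hc1⟩ := h1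
    obtain ⟨⟨ha2, _⟩, hc2⟩ := h2
    simp only at heq
    have e1 : 0 ≤ (r1 - a)/(d:ℤ) := Int.ediv_nonneg (by linarith) (le_of_lt hd')
    have e2 : 0 ≤ (r2 - a)/(d:ℤ) := Int.ediv_nonneg (by linarith) (le_of_lt hd')
    have heq' : (r1 - a)/(d:ℤ) = (r2 - a)/(d:ℤ) := by omega
    have m1 := Int.mul_ediv_add_emod (r1 - a) d
    have m2 := Int.mul_ediv_add_emod (r2 - a) d
    have hm1 : (r1 - a) % d = (c - a % d) % d := by
      rw [Int.sub_emod, hc1]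
    have hm2 : (r2 - a) % d = (c - a % d) % d := by
      rw [Int.sub_emod, hc2]
    rw [heq'] at m1
    omega

private lemma ceil_le_sub (k d : ℕ) (hk : 0 < k) (hd : 0 < d) (hdvd : d ∣ 2*k) :
    (k + d - 1)/d ≤ 2*k/d - k/d := by
  obtain ⟨mm, hmm⟩ := hdvd
  have hq := Nat.div_add_mod k d
  set q := k / d with hqd
  set r := k % d with hrd
  have hrlt : r < d := Nat.mod_lt _ hd
  have h2r : d ∣ 2*r := by
    have hA : d ∣ 2*(d*q) := (dvd_mul_right d q).mul_left 2
    have hB : d ∣ 2*k := ⟨mm, hmm⟩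
    have he : 2*r = 2*k - 2*(d*q) := by omega
    rw [he]
    exact Nat.dvd_sub hB hA
  obtain ⟨s, hs⟩ := h2r
  have hs2 : s < 2 := by
    by_contra hcon
    push_neg at hcon
    have : d*2 ≤ d*s := Nat.mul_le_mul_left d hcon
    omega
  have hcase : 2*r = 0 ∨ 2*r = d := by
    interval_cases s <;> omega
  rcases hcase with h0 | h1
  · have hr0 : r = 0 := by omega
    have e1 : (k + d - 1)/d = q := by
      have : k + d - 1 = d*q + (d-1) := by omega
      rw [this, Nat.mul_add_div hd, Nat.div_eq_of_lt (by omega)]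
      omega
    have e2 : 2*k/d = 2*q := by
      have hb : d*(2*q) = 2*(d*q) := by ring
      have : 2*k = d*(2*q) + 0 := by omega
      rw [this, Nat.mul_add_div hd, Nat.zero_div]
      omega
    omega
  · have hr1 : 1 ≤ r := by omega
    have e1 : (k + d - 1)/d = q + 1 := by
      have hb : d*(q+1) = d*q + d := by ring
      have : k + d - 1 = d*(q+1) + (r-1) := by omega
      rw [this, Nat.mul_add_div hd, Nat.div_eq_of_lt (by omega)]
    have e2 : 2*k/d = 2*q + 1 := by
      have hb : d*(2*q+1) = 2*(d*q) + d := by ring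
      have : 2*k = d*(2*q+1) + 0 := by omega
      rw [this, Nat.mul_add_div hd, Nat.zero_div]
    omega

private lemma window_bound (a0 T : ℤ) (k : ℕ) (hk : 0 < k) (x c : ℤ) (hc : c = 0 ∨ c = 1) :
    ((Finset.Ico x (x + ((2*k / Int.gcd T (2*k) : ℕ) : ℤ))).filter
        (fun j => ((a0 + j*T).fdiv (k:ℤ)) % 2 = c)).card
      ≤ 2*k / Int.gcd T (2*k) - k / Int.gcd T (2*k) := by
  have hk' : (0:ℤ) < k := by exact_mod_cast hk
  have h2k : (0:ℤ) < 2*k := by linarith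
  set d := Int.gcd T (2*(k:ℤ)) with hddef
  have hd : 0 < d := Int.gcd_pos_iff.mpr (Or.inr (ne_of_gt h2k))
  have hd' : (0:ℤ) < d := by exact_mod_cast hd
  have hdT : (d:ℤ) ∣ T := Int.gcd_dvd_left _ _
  have hd2k : (d:ℤ) ∣ 2*(k:ℤ) := Int.gcd_dvd_right _ _
  have hd2kn : d ∣ 2*k := by
    have := hd2k
    rwa [show (2*(k:ℤ)) = ((2*k : ℕ) : ℤ) by push_cast; ring, Int.natCast_dvd_natCast] at this
  set m := 2*k/d with hmdef
  have hmd : m * d = 2*k := Nat.div_mul_cancel hd2kn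
  have hm : 0 < m := Nat.div_pos (Nat.le_of_dvd (by omega) hd2kn) hd
  have hm' : (0:ℤ) < m := by exact_mod_cast hm
  have hmd' : (m:ℤ) * d = 2*(k:ℤ) := by exact_mod_cast hmd
  -- main injection
  have hcard : ((Finset.Ico x (x + (m:ℤ))).filter
        (fun j => ((a0 + j*T).fdiv (k:ℤ)) % 2 = c)).card
      ≤ ((Finset.Ico (c*k) (c*k + (k:ℤ))).filter (fun r => r % (d:ℤ) = a0 % d)).card := by
    apply Finset.card_le_card_of_injOn (fun j => (a0 + j*T) % (2*(k:ℤ)))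
    · intro j hj
      simp only [Finset.mem_coe, Finset.mem_filter, Finset.mem_Ico] at hj ⊢
      obtain ⟨⟨_, _⟩, hP⟩ := hj
      rw [Int.fdiv_eq_ediv_of_nonneg _ (le_of_lt hk'), ediv_two_eq _ k hk] at hP
      constructor
      · constructor
        · have := (Int.le_ediv_iff_mul_le hk').mp (le_of_eq hP.symm)
          linarith
        · have : (a0 + j*T) % (2*(k:ℤ)) / k < c + 1 := by omega
          have := (Int.ediv_lt_iff_lt_mul hk').mp this
          linarith
      · rw [Int.emod_emod_of_dvd _ hd2k]
        obtain ⟨t, ht⟩ := hdT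
        rw [ht, show a0 + j*((d:ℤ)*t) = a0 + (d:ℤ)*(j*t) by ring,
          Int.add_mul_emod_self_left]
    · intro j1 h1 j2 h2 heq
      simp only [Finset.coe_filter, Set.mem_setOf_eq, Finset.mem_Ico] at h1 h2
      obtain ⟨⟨hl1, hu1⟩, _⟩ := h1
      obtain ⟨⟨hl2, hu2⟩, _⟩ := h2
      simp only at heq
      have hdvd2k : (2*(k:ℤ)) ∣ (a0 + j1*T) - (a0 + j2*T) := by
        rw [Int.emod_eq_emod_iff_emod_sub_eq_zero] at heq
        exact Int.dvd_of_emod_eq_zero heq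
      have hdvd' : (2*(k:ℤ)) ∣ (j1 - j2)*T := by
        have : (a0 + j1*T) - (a0 + j2*T) = (j1 - j2)*T := by ring
        rwa [this] at hdvd2k
      obtain ⟨t, ht⟩ := hdT
      have hTd : t = T / d := by
        rw [ht]; rw [Int.mul_ediv_cancel_left _ (ne_of_gt hd')]
      have hmz : (m:ℤ) = (2*(k:ℤ)) / d := by
        rw [← hmd', Int.mul_ediv_cancel _ (ne_of_gt hd')]
      have hcop : IsCoprime ((m:ℤ)) t := by
        rw [Int.isCoprime_iff_gcd_eq_one, hTd, hmz, Int.gcd_comm]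
        exact Int.gcd_div_gcd_div_gcd hd
      have hmdvd : (m:ℤ) ∣ (j1 - j2) * t := by
        have h1 : (j1 - j2)*T = (d:ℤ) * ((j1 - j2)*t) := by rw [ht]; ring
        have h2 : (2*(k:ℤ)) = (d:ℤ) * m := by rw [← hmd']; ring
        rw [h1, h2] at hdvd'
        exact (mul_dvd_mul_iff_left (ne_of_gt hd')).mp hdvd'
      have hmj : (m:ℤ) ∣ (j1 - j2) := hcop.dvd_of_dvd_mul_right hmdvd
      by_contra hne
      have habs : 0 < |j1 - j2| := by
        rcases lt_trichotomy j1 j2 with h | h | h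
        · rw [abs_of_neg (by linarith)]; linarith
        · exact absurd h hne
        · rw [abs_of_pos (by linarith)]; linarith
      have : (m:ℤ) ≤ |j1 - j2| := Int.le_of_dvd habs ((dvd_abs _ _).mpr hmj)
      have : |j1 - j2| < m := by
        rcases le_or_gt j1 j2 with h | h
        · rw [abs_of_nonpos (by linarith)]; linarith
        · rw [abs_of_pos (by linarith)]; linarith
      omega
  refine hcard.trans ?_
  have h1 : ((Finset.Ico (c*k) (c*k + (k:ℤ))).filter (fun r => r % (d:ℤ) = a0 % d)).card
      ≤ (k + d - 1)/d := count_res (c*k) (a0 % d) k d hd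
  exact h1.trans (ceil_le_sub k d hk hd hd2kn)

private lemma split_bound (P : ℤ → Prop) [DecidablePred P] (j0 : ℤ) (p m N : ℕ) (hm : 0 < m)
    (h : ∀ x : ℤ, ((Finset.Ico x (x + (m:ℤ))).filter P).card ≤ N) :
    ((Finset.Ico j0 (j0 + (p:ℤ))).filter P).card ≤ N * (p/m + 1) := by
  have hsub : Finset.Ico j0 (j0 + (p:ℤ)) ⊆
      (Finset.range (p/m + 1)).biUnion
        (fun i => Finset.Ico (j0 + ((i*m : ℕ) : ℤ)) (j0 + ((i*m : ℕ) : ℤ) + (m:ℤ))) := by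
    intro j hj
    simp only [Finset.mem_Ico] at hj
    rw [Finset.mem_biUnion]
    set t := (j - j0).toNat with htdef
    have htp : t < p := by omega
    refine ⟨t/m, ?_, ?_⟩
    · rw [Finset.mem_range]
      have := Nat.div_le_div_right (c := m) (le_of_lt htp)
      omega
    · simp only [Finset.mem_Ico]
      have h1 := Nat.div_add_mod t m
      have h2 : t % m < m := Nat.mod_lt _ hm
      have hj' : j = j0 + t := by omega
      have hbr : t/m*m = m*(t/m) := Nat.mul_comm _ _
      constructor
      · omega
      · omega
  calc ((Finset.Ico j0 (j0 + (p:ℤ))).filter P).card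
      ≤ (((Finset.range (p/m+1)).biUnion
          (fun i => Finset.Ico (j0 + ((i*m:ℕ):ℤ)) (j0 + ((i*m:ℕ):ℤ) + (m:ℤ)))).filter P).card :=
        Finset.card_le_card (Finset.filter_subset_filter _ hsub)
    _ ≤ ∑ i ∈ Finset.range (p/m+1),
          ((Finset.Ico (j0 + ((i*m:ℕ):ℤ)) (j0 + ((i*m:ℕ):ℤ) + (m:ℤ))).filter P).card := by
        rw [Finset.filter_biUnion]
        exact Finset.card_biUnion_le
    _ ≤ ∑ _i ∈ Finset.range (p/m+1), N := Finset.sum_le_sum (fun i _ => h _)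
    _ = N * (p/m+1) := by rw [Finset.sum_const, smul_eq_mul, Finset.card_range, mul_comm]

/-- Corollary (upper count): if `2k ∤ T`, then among any `p` consecutive elements
`a_j = a_0 + j·T` of the arithmetic progression, setting `b_j = ⌊a_j/k⌋ mod 2`,
at most `(2k/gcd(T,2k) − ⌊k/gcd(T,2k)⌋)·(⌊p·gcd(T,2k)/(2k)⌋ + 1)` of the `b_j`
are `0`, and at most the same number of them are `1`. -/
theorem arith_progr_block_upper (a0 T : ℤ) (k : ℕ) (hk : 0 < k)
    (hdvd : ¬ ((2 * (k : ℤ)) ∣ T)) (j0 : ℤ) (p : ℕ) :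
    ((Finset.Ico j0 (j0 + (p : ℤ))).filter
        (fun j => ((a0 + j * T).fdiv (k : ℤ)) % 2 = 0)).card ≤
      (2 * k / Int.gcd T (2 * k) - k / Int.gcd T (2 * k)) *
        (p * Int.gcd T (2 * k) / (2 * k) + 1) ∧
    ((Finset.Ico j0 (j0 + (p : ℤ))).filter
        (fun j => ((a0 + j * T).fdiv (k : ℤ)) % 2 = 1)).card ≤
      (2 * k / Int.gcd T (2 * k) - k / Int.gcd T (2 * k)) *
        (p * Int.gcd T (2 * k) / (2 * k) + 1) := by
  have hk' : (0:ℤ) < k := by exact_mod_cast hk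
  have h2k : (0:ℤ) < 2*k := by linarith
  set d := Int.gcd T (2*(k:ℤ)) with hddef
  have hd : 0 < d := Int.gcd_pos_iff.mpr (Or.inr (ne_of_gt h2k))
  have hd2kn : d ∣ 2*k := by
    have := (Int.gcd_dvd_right _ _ : (d:ℤ) ∣ 2*(k:ℤ))
    rwa [show (2*(k:ℤ)) = ((2*k : ℕ) : ℤ) by push_cast; ring, Int.natCast_dvd_natCast] at this
  set m := 2*k/d with hmdef
  have hmd : m * d = 2*k := Nat.div_mul_cancel hd2kn
  have hm : 0 < m := Nat.div_pos (Nat.le_of_dvd (by omega) hd2kn) hd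
  have hpm : p * d / (2*k) = p / m := by
    rw [← hmd]
    exact Nat.mul_div_mul_right p m hd
  rw [hpm]
  constructor
  · have := split_bound (fun j => ((a0 + j * T).fdiv (k : ℤ)) % 2 = 0) j0 p m
      (2*k/d - k/d) hm (fun x => window_bound a0 T k hk x 0 (Or.inl rfl))
    exact this
  · have := split_bound (fun j => ((a0 + j * T).fdiv (k : ℤ)) % 2 = 1) j0 p m
      (2*k/d - k/d) hm (fun x => window_bound a0 T k hk x 1 (Or.inr rfl))
    exact this
end

section
/- (Rough upper bound lemma) For every integer n ≥ 1, limsup_{m→∞} (lowdeg Q_n(m))/m ≤ 22/15 < 1.47. -/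
open Polynomial Filter

/-- The on-site energy polynomial `ε_n(α) = (−1)^n − Σ_{k=2}^{n+1} (−1)^{⌊n/k⌋} α^{k−1}` in `ℤ[α]`. -/
noncomputable def eps (n : ℕ) : Polynomial ℤ :=
  C ((-1 : ℤ) ^ n) - ∑ k ∈ Finset.Icc 2 (n + 1), C ((-1 : ℤ) ^ (n / k)) * X ^ (k - 1)

/-- `Q_n(m) = ∏_{s=1}^m (ε_{n+s}(α) − ε_n(α))`. -/
noncomputable def Q (n m : ℕ) : Polynomial ℤ :=
  ∏ s ∈ Finset.Icc 1 m, (eps (n + s) - eps n)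

/-- `lowdeg P`: the multiplicity of the root `α = 0`, i.e. the least `i` with nonzero
coefficient of `α^i`. -/
noncomputable def lowdeg (P : Polynomial ℤ) : ℕ := P.natTrailingDegree

/-- `h_{n,m}(i)`: the number of `s` with `1 ≤ s ≤ m` such that
`lowdeg (ε_{n+s} − ε_n) > i`. -/
noncomputable def hcount (n m i : ℕ) : ℕ :=
  ((Finset.Icc 1 m).filter (fun s => i < lowdeg (eps (n + s) - eps n))).card

lemma negpow_ite (c : ℕ) : ((-1 : ℤ)) ^ c = if c % 2 = 0 then 1 else -1 := by
  rcases Nat.even_or_odd c with h | h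
  · rw [h.neg_one_pow, if_pos (Nat.even_iff.mp h)]
  · rw [h.neg_one_pow, if_neg (by rw [Nat.odd_iff] at h; omega)]

lemma negpow_eq_iff (a b : ℕ) : ((-1 : ℤ) ^ a = (-1) ^ b) ↔ a % 2 = b % 2 := by
  rw [negpow_ite, negpow_ite]
  split_ifs <;> simp_all <;> omega

lemma coeff_eps_zero (n : ℕ) : (eps n).coeff 0 = (-1) ^ n := by
  simp only [eps, coeff_sub, coeff_C, Polynomial.finset_sum_coeff, coeff_C_mul, coeff_X_pow,
    if_true, eq_self_iff_true]
  rw [Finset.sum_eq_zero, sub_zero]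
  intro x hx
  simp only [Finset.mem_Icc] at hx
  rw [if_neg (by omega), mul_zero]

lemma coeff_eps_pos (n i : ℕ) (hi : 1 ≤ i) :
    (eps n).coeff i = if i ≤ n then -(-1) ^ (n / (i + 1)) else 0 := by
  simp only [eps, coeff_sub, coeff_C, Polynomial.finset_sum_coeff, coeff_C_mul, coeff_X_pow]
  rw [if_neg (by omega), zero_sub]
  have : ∀ x ∈ Finset.Icc 2 (n + 1), ((-1 : ℤ)) ^ (n / x) * (if i = x - 1 then 1 else 0)
      = if x = i + 1 then (-1) ^ (n / x) else 0 := by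
    intro x hx
    simp only [Finset.mem_Icc] at hx
    by_cases h : x = i + 1
    · rw [if_pos h, if_pos (by omega), mul_one]
    · rw [if_neg h, if_neg (by omega), mul_zero]
  rw [Finset.sum_congr rfl this, Finset.sum_ite_eq' (Finset.Icc 2 (n + 1))]
  simp only [Finset.mem_Icc]
  by_cases h : i ≤ n
  · rw [if_pos (by omega), if_pos h]
  · rw [if_neg (by omega), if_neg h, neg_zero]

/-- Abbreviation for the difference polynomial. -/
noncomputable def Dp (n s : ℕ) : Polynomial ℤ := eps (n + s) - eps n

lemma coeff_Dp_zero (n s : ℕ) : (Dp n s).coeff 0 = (-1) ^ (n + s) - (-1) ^ n := by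
  simp [Dp, coeff_eps_zero]

lemma coeff_Dp_mid (n s i : ℕ) (h1 : 1 ≤ i) (h2 : i ≤ n) :
    (Dp n s).coeff i = -(-1) ^ ((n + s) / (i + 1)) + (-1) ^ (n / (i + 1)) := by
  simp only [Dp, coeff_sub, coeff_eps_pos _ _ h1, if_pos h2, if_pos (by omega : i ≤ n + s)]
  ring

lemma coeff_Dp_top (n s : ℕ) (hs : 1 ≤ s) : (Dp n s).coeff (n + 1) ≠ 0 := by
  rw [Dp, coeff_sub, coeff_eps_pos _ _ (by omega), coeff_eps_pos _ _ (by omega),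
    if_pos (by omega), if_neg (by omega), sub_zero]
  rcases Nat.even_or_odd ((n + s) / (n + 1 + 1)) with h | h
  · rw [h.neg_one_pow]; norm_num
  · rw [h.neg_one_pow]; norm_num

lemma Dp_ne_zero (n s : ℕ) (hs : 1 ≤ s) : Dp n s ≠ 0 := fun h => coeff_Dp_top n s hs (by rw [h]; simp)

lemma L_le (n s : ℕ) (hs : 1 ≤ s) : (Dp n s).natTrailingDegree ≤ n + 1 :=
  Polynomial.natTrailingDegree_le_of_ne_zero (coeff_Dp_top n s hs)

lemma lowdeg_Q_eq (n m : ℕ) :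
    lowdeg (Q n m) = ∑ s ∈ Finset.Icc 1 m, (Dp n s).natTrailingDegree := by
  unfold lowdeg Q
  induction m with
  | zero => simp
  | succ m ih =>
    rw [Finset.prod_Icc_succ_top (by omega), Finset.sum_Icc_succ_top (by omega)]
    have hne : (∏ s ∈ Finset.Icc 1 m, (eps (n + s) - eps n)) ≠ 0 := by
      rw [Finset.prod_ne_zero_iff]
      intro s hs
      exact Dp_ne_zero n s (by simp at hs; omega)
    rw [show eps (n + (m + 1)) - eps n = Dp n (m + 1) from rfl,
      Polynomial.natTrailingDegree_mul hne (Dp_ne_zero n (m+1) (by omega)), ih]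

lemma parity_cond (n s k : ℕ) (h2 : 2 ≤ k) (hk : k ≤ n + 1)
    (hL : k - 1 < (Dp n s).natTrailingDegree) : (n + s) / k % 2 = n / k % 2 := by
  have h0 := Polynomial.coeff_eq_zero_of_lt_natTrailingDegree hL
  rw [coeff_Dp_mid n s (k-1) (by omega) (by omega)] at h0
  rw [show k - 1 + 1 = k from by omega] at h0
  have : ((-1 : ℤ)) ^ ((n + s) / k) = (-1) ^ (n / k) := by linarith [h0]
  exact (negpow_eq_iff _ _).mp this

lemma even_of_L (n s : ℕ) (h : 0 < (Dp n s).natTrailingDegree) : 2 ∣ s := by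
  have h0 := Polynomial.coeff_eq_zero_of_lt_natTrailingDegree h
  rw [coeff_Dp_zero] at h0
  have : ((-1 : ℤ)) ^ (n + s) = (-1) ^ n := by linarith [h0]
  have := (negpow_eq_iff _ _).mp this
  omega

lemma dyadic (n s J a : ℕ) (hJ : 1 ≤ J) (hJn : J ≤ n + 1) (ha : 2 ^ a ≤ J)
    (hL : J ≤ (Dp n s).natTrailingDegree) : 2 ^ (a + 1) ∣ s := by
  induction a with
  | zero => simpa using even_of_L n s (by omega)
  | succ a ih =>
    have h2a : (2:ℕ) ^ a ≤ 2 ^ (a+1) := by apply Nat.pow_le_pow_right <;> omega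
    obtain ⟨u, hu⟩ := ih (le_trans h2a ha)
    set k := 2 ^ (a + 1) with hk
    have hk2 : 2 ≤ k := by
      calc 2 = 2^1 := rfl
      _ ≤ k := by apply Nat.pow_le_pow_right <;> omega
    have hpc := parity_cond n s k hk2 (by omega) (by omega)
    rw [hu, Nat.add_mul_div_left _ _ (by omega : 0 < k)] at hpc
    have : 2 ∣ u := by omega
    obtain ⟨v, hv⟩ := this
    exact ⟨v, by rw [hu, hv]; ring⟩

def Bset (n p : ℕ) : Finset ℕ :=
  (Finset.range (2*p)).filter (fun r => r % 2 = 0 ∧ (n + r) / p % 2 = n / p % 2)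

def Tset (n p : ℕ) : Finset ℕ := (Bset n p).image (· % p)

lemma mem_Tset (n p s : ℕ) (hp : 0 < p) (hs2 : s % 2 = 0) (hc : (n+s)/p % 2 = n/p % 2) :
    s % p ∈ Tset n p := by
  have h2p : 0 < 2*p := by omega
  set r := s % (2*p) with hr
  have heq := Nat.div_add_mod s (2*p)
  have hrB : r ∈ Bset n p := by
    rw [Bset, Finset.mem_filter, Finset.mem_range]
    refine ⟨Nat.mod_lt _ h2p, ?_, ?_⟩
    · rw [hr, Nat.mod_mod_of_dvd s ⟨p, rfl⟩]
      exact hs2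
    · have hmul : 2*p*(s/(2*p)) = p * (2 * (s / (2*p))) := by ring
      have hns : n + s = (n + r) + p * (2 * (s / (2*p))) := by omega
      rw [hns, Nat.add_mul_div_left _ _ hp] at hc
      omega
  rw [Tset, Finset.mem_image]
  exact ⟨r, hrB, by rw [hr, Nat.mod_mod_of_dvd s ⟨2, by ring⟩]⟩

lemma range_cond (n p r : ℕ) (hp : 0 < p) (hr : r < 2*p) :
    ((n + r) / p % 2 = n / p % 2) ↔ (r < p - n % p ∨ p - n % p + p ≤ r) := by
  have h1 : (n + r) / p = n / p + (n % p + r) / p := by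
    conv_lhs => rw [show n + r = p * (n / p) + (n % p + r) from by
      have := Nat.div_add_mod n p; omega]
    rw [Nat.mul_add_div hp]
  have he2 : n % p < p := Nat.mod_lt _ hp
  have hqe := Nat.div_add_mod (n % p + r) p
  have hee : (n % p + r) % p < p := Nat.mod_lt _ hp
  have hq2 : (n % p + r) / p ≤ 2 := by
    by_contra hcon
    push_neg at hcon
    have : p * 3 ≤ p * ((n % p + r) / p) := Nat.mul_le_mul_left p (by omega)
    omega
  rw [h1]
  set q := (n % p + r) / p
  interval_cases q <;> omega

lemma card_Tset (n p : ℕ) (hp : p % 2 = 1) : (Tset n p).card ≤ (p+1)/2 := by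
  refine le_trans (Finset.card_image_le) ?_
  have hp0 : 0 < p := by omega
  set c := p - n % p with hc
  have hcb : 1 ≤ c ∧ c ≤ p := by have := Nat.mod_lt n hp0; omega
  have : (Bset n p).card ≤ (Finset.range ((p+1)/2)).card := by
    apply Finset.card_le_card_of_injOn
      (fun r => if r < c then r / 2 else (r - c - p) / 2 + (c + 1) / 2)
    · intro r hrB
      rw [Bset, Finset.mem_coe, Finset.mem_filter, Finset.mem_range] at hrB
      obtain ⟨hr2p, hr2, hcond⟩ := hrB
      rw [range_cond n p r hp0 hr2p] at hcond
      rw [Finset.mem_coe, Finset.mem_range]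
      beta_reduce
      split_ifs <;> omega
    · intro r1 h1 r2 h2 hg
      simp only [Bset, Finset.coe_filter, Set.mem_setOf_eq, Finset.mem_range] at h1 h2
      obtain ⟨h1a, h1b⟩ := h1
      obtain ⟨h2a, h2b⟩ := h2
      have h1 : r1 < 2*p ∧ (r1 % 2 = 0 ∧ (n + r1) / p % 2 = n / p % 2) := ⟨h1a, h1b⟩
      have h2 : r2 < 2*p ∧ (r2 % 2 = 0 ∧ (n + r2) / p % 2 = n / p % 2) := ⟨h2a, h2b⟩
      rw [range_cond n p _ hp0 h1.1] at h1
      rw [range_cond n p _ hp0 h2.1] at h2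
      simp only at hg
      split_ifs at hg <;> omega
  simpa using this

lemma modEq_prod (a b : ℕ) (P : Finset ℕ) (h : ∀ p ∈ P, a ≡ b [MOD p])
    (hcop : ∀ p ∈ P, ∀ q ∈ P, p ≠ q → Nat.Coprime p q) :
    a ≡ b [MOD ∏ p ∈ P, p] := by
  induction P using Finset.induction with
  | empty => simpa using Nat.modEq_one
  | @insert p P hpP ih =>
    rw [Finset.prod_insert hpP]
    have cop : Nat.Coprime p (∏ q ∈ P, q) :=
      Nat.Coprime.prod_right (fun q hq =>
        hcop p (Finset.mem_insert_self p P) q (Finset.mem_insert_of_mem hq)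
          (fun he => hpP (he ▸ hq)))
    exact (Nat.modEq_and_modEq_iff_modEq_mul cop).mp
      ⟨h p (Finset.mem_insert_self p P),
       ih (fun q hq => h q (Finset.mem_insert_of_mem hq))
          (fun q hq q' hq' => hcop q (Finset.mem_insert_of_mem hq) q' (Finset.mem_insert_of_mem hq'))⟩

lemma count_bound (n m M2 : ℕ) (hM2 : 2 ∣ M2) (hM2p : 0 < M2) (P : Finset ℕ)
    (hP : ∀ p ∈ P, p.Prime ∧ p % 2 = 1) (hcop2 : ∀ p ∈ P, Nat.Coprime M2 p)
    (F : Finset ℕ) (hF : F ⊆ Finset.Icc 1 m)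
    (hdvd : ∀ s ∈ F, M2 ∣ s)
    (hcond : ∀ s ∈ F, ∀ p ∈ P, (n + s) / p % 2 = n / p % 2) :
    F.card ≤ (m / (M2 * ∏ p ∈ P, p) + 1) * ∏ p ∈ P, ((p+1)/2) := by
  have hMo : 0 < ∏ p ∈ P, p := Finset.prod_pos (fun p hp => (hP p hp).1.pos)
  set Mo := ∏ p ∈ P, p with hMoDef
  set M := M2 * Mo with hMdef
  have hM : 0 < M := Nat.mul_pos hM2p hMo
  have key : F.card ≤ ((Finset.range (m / M + 1)) ×ˢ (P.pi (fun p => Tset n p))).card := by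
    apply Finset.card_le_card_of_injOn (fun s => (s / M, fun p _ => s % p))
    · intro s hsF
      have hsm : s ∈ Finset.Icc 1 m := hF hsF
      rw [Finset.mem_Icc] at hsm
      rw [Finset.mem_coe, Finset.mem_product]
      constructor
      · rw [Finset.mem_range]
        have := Nat.div_le_div_right (c := M) hsm.2
        beta_reduce
        omega
      · rw [Finset.mem_pi]
        intro p hp
        refine mem_Tset n p s (hP p hp).1.pos ?_ (hcond s hsF p hp)
        have h2s : 2 ∣ s := dvd_trans hM2 (hdvd s hsF)
        omega
    · intro s1 h1 s2 h2 hg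
      simp only [Prod.mk.injEq] at hg
      have hmodp : ∀ p ∈ P, s1 ≡ s2 [MOD p] := by
        intro p hp
        have := congrFun (congrFun hg.2 p) hp
        exact this
      have hmod2 : s1 ≡ s2 [MOD M2] := by
        obtain ⟨u1, hu1⟩ := hdvd s1 (Finset.mem_coe.mp h1)
        obtain ⟨u2, hu2⟩ := hdvd s2 (Finset.mem_coe.mp h2)
        unfold Nat.ModEq
        rw [hu1, hu2, Nat.mul_mod_right, Nat.mul_mod_right]
      have hmodM : s1 ≡ s2 [MOD M] := by
        rw [hMdef]
        refine (Nat.modEq_and_modEq_iff_modEq_mul ?_).mp ⟨hmod2, ?_⟩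
        · exact Nat.Coprime.prod_right (fun q hq => hcop2 q hq)
        · exact modEq_prod s1 s2 P hmodp (fun p hp q hq hne =>
            (Nat.coprime_primes (hP p hp).1 (hP q hq).1).mpr hne)
      have e1 := Nat.div_add_mod s1 M
      have e2 := Nat.div_add_mod s2 M
      unfold Nat.ModEq at hmodM
      have : M * (s1 / M) = M * (s2 / M) := by rw [hg.1]
      omega
  calc F.card ≤ _ := key
    _ = (m / M + 1) * ∏ p ∈ P, (Tset n p).card := by
        rw [Finset.card_product, Finset.card_range, Finset.card_pi]
    _ ≤ (m / M + 1) * ∏ p ∈ P, ((p+1)/2) := by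
        apply Nat.mul_le_mul_left
        exact Finset.prod_le_prod' (fun p hp => card_Tset n p (hP p hp).2)

lemma layer_bound (n m J a : ℕ) (hJ1 : 1 ≤ J) (hJn : J ≤ n + 1) (ha : 2 ^ a ≤ J)
    (P : Finset ℕ) (hP : ∀ p ∈ P, p.Prime ∧ p % 2 = 1 ∧ p ≤ J) :
    ((Finset.Icc 1 m).filter (fun s => J ≤ (Dp n s).natTrailingDegree)).card
      ≤ (m / (2^(a+1) * ∏ p ∈ P, p) + 1) * ∏ p ∈ P, ((p+1)/2) := by
  apply count_bound n m (2^(a+1)) ⟨2^a, by ring⟩ (Nat.pow_pos (by omega)) P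
    (fun p hp => ⟨(hP p hp).1, (hP p hp).2.1⟩)
    (fun p hp => Nat.Coprime.pow_left _
      (Nat.coprime_two_left.mpr (Nat.odd_iff.mpr (hP p hp).2.1)))
    _ (Finset.filter_subset _ _)
  · intro s hs
    rw [Finset.mem_filter] at hs
    exact dyadic n s J a hJ1 hJn ha hs.2
  · intro s hs p hp
    rw [Finset.mem_filter] at hs
    have hpJ := (hP p hp).2.2
    have hp2 := (hP p hp).1.two_le
    exact parity_cond n s p hp2 (by omega) (by omega)

lemma layer_boundR (n m J a : ℕ) (hJ1 : 1 ≤ J) (hJn : J ≤ n + 1) (ha : 2 ^ a ≤ J)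
    (P : Finset ℕ) (hP : ∀ p ∈ P, p.Prime ∧ p % 2 = 1 ∧ p ≤ J) :
    (((Finset.Icc 1 m).filter (fun s => J ≤ (Dp n s).natTrailingDegree)).card : ℝ)
      ≤ m * ((1/2^(a+1)) * ∏ p ∈ P, (((p:ℝ)+1)/(2*p))) + ∏ p ∈ P, (((p:ℝ)+1)/2) := by
  have hnat := layer_bound n m J a hJ1 hJn ha P hP
  set M : ℕ := 2^(a+1) * ∏ p ∈ P, p with hMdef
  have hMpos : 0 < M := Nat.mul_pos (Nat.pow_pos (by omega))
    (Finset.prod_pos (fun p hp => (hP p hp).1.pos))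
  have hppos : ∀ p ∈ P, (0:ℝ) < p := fun p hp => by
    exact_mod_cast (hP p hp).1.pos
  -- real version of the count product
  have hRcast : ((∏ p ∈ P, ((p+1)/2) : ℕ) : ℝ) = ∏ p ∈ P, (((p:ℝ)+1)/2) := by
    rw [Nat.cast_prod]
    apply Finset.prod_congr rfl
    intro p hp
    have hodd : (p + 1) % 2 = 0 := by have := (hP p hp).2.1; omega
    have : ((p+1)/2 : ℕ) * 2 = p + 1 := Nat.div_mul_cancel ⟨(p+1)/2, by omega⟩
    have := congrArg (fun x : ℕ => (x : ℝ)) this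
    push_cast at this
    linarith
  have hterm : (∏ p ∈ P, (((p:ℝ)+1)/2)) = ((1/2^(a+1)) * ∏ p ∈ P, (((p:ℝ)+1)/(2*p))) * M := by
    rw [hMdef]
    push_cast
    rw [show (1 / (2:ℝ) ^ (a + 1) * ∏ p ∈ P, ((p:ℝ) + 1) / (2 * p)) * (2 ^ (a + 1) * ∏ i ∈ P, (i:ℝ))
        = (1 / (2:ℝ)^(a+1) * 2^(a+1)) * ((∏ p ∈ P, ((p:ℝ) + 1) / (2 * p)) * ∏ i ∈ P, (i:ℝ)) from by ring,
      one_div_mul_cancel (by positivity), one_mul, ← Finset.prod_mul_distrib]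
    apply Finset.prod_congr rfl
    intro p hp
    have := hppos p hp
    field_simp
  have hfinal : (((Finset.Icc 1 m).filter (fun s => J ≤ (Dp n s).natTrailingDegree)).card : ℝ)
      ≤ ((m / M : ℕ) + 1) * ∏ p ∈ P, (((p:ℝ)+1)/2) := by
    rw [← hRcast]
    exact_mod_cast hnat
  refine le_trans hfinal ?_
  have hMR : (0:ℝ) < (M:ℝ) := by exact_mod_cast hMpos
  have hdivle : ((m / M : ℕ) : ℝ) ≤ (m : ℝ) / (M : ℝ) := Nat.cast_div_le
  have htpos : (0:ℝ) ≤ (1/2^(a+1)) * ∏ p ∈ P, (((p:ℝ)+1)/(2*p)) := by positivity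
  set t : ℝ := (1/2^(a+1)) * ∏ p ∈ P, (((p:ℝ)+1)/(2*p)) with ht
  calc ((m / M : ℕ) + 1 : ℝ) * ∏ p ∈ P, (((p:ℝ)+1)/2)
      = ((m / M : ℕ) + 1 : ℝ) * (t * M) := by rw [hterm]
    _ ≤ ((m:ℝ)/M + 1) * (t * M) := by
        apply mul_le_mul_of_nonneg_right (by linarith) (by positivity)
    _ = (m:ℝ) * t + t * M := by field_simp
    _ = (m:ℝ) * t + ∏ p ∈ P, (((p:ℝ)+1)/2) := by rw [hterm]

def Podd (x : ℕ) : Finset ℕ := (Finset.range (x+1)).filter (fun p => p.Prime ∧ p % 2 = 1)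

noncomputable def Gf (P : Finset ℕ) : ℝ := ∏ p ∈ P, (((p:ℝ)+1)/(2*p))
noncomputable def Cf (P : Finset ℕ) : ℝ := ∏ p ∈ P, (((p:ℝ)+1)/2)

def Pr (J : ℕ) : Finset ℕ :=
  if J < 3 then ∅ else if J < 5 then {3} else if J < 8 then {3,5} else Podd (2 ^ (Nat.log 2 J))

noncomputable def termR (J : ℕ) : ℝ := (1/2^(Nat.log 2 J + 1)) * Gf (Pr J)

lemma Pr_spec (J : ℕ) (hJ : 1 ≤ J) : ∀ p ∈ Pr J, p.Prime ∧ p % 2 = 1 ∧ p ≤ J := by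
  intro p hp
  rw [Pr] at hp
  split_ifs at hp with h1 h2 h3
  · simp at hp
  · simp at hp
    subst hp
    exact ⟨by norm_num, by norm_num, by omega⟩
  · simp at hp
    rcases hp with h | h <;> subst h
    · exact ⟨by norm_num, by norm_num, by omega⟩
    · exact ⟨by norm_num, by norm_num, by omega⟩
  · rw [Podd, Finset.mem_filter, Finset.mem_range] at hp
    refine ⟨hp.2.1, hp.2.2, ?_⟩
    have := Nat.pow_log_le_self 2 (show J ≠ 0 by omega)
    omega

lemma sum_L_eq (n m : ℕ) :
    ∑ s ∈ Finset.Icc 1 m, (Dp n s).natTrailingDegree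
      = ∑ J ∈ Finset.Icc 1 (n+1),
          ((Finset.Icc 1 m).filter (fun s => J ≤ (Dp n s).natTrailingDegree)).card := by
  have h1 : ∀ s ∈ Finset.Icc 1 m, (Dp n s).natTrailingDegree
      = ∑ J ∈ Finset.Icc 1 (n+1), if J ≤ (Dp n s).natTrailingDegree then 1 else 0 := by
    intro s hs
    rw [Finset.mem_Icc] at hs
    rw [Finset.sum_ite, Finset.sum_const, Finset.sum_const]
    simp only [smul_eq_mul, mul_one, mul_zero, add_zero]
    have : (Finset.Icc 1 (n+1)).filter (fun J => J ≤ (Dp n s).natTrailingDegree)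
        = Finset.Icc 1 ((Dp n s).natTrailingDegree) := by
      ext j
      simp only [Finset.mem_filter, Finset.mem_Icc]
      have := L_le n s hs.1
      omega
    rw [this, Nat.card_Icc]
    omega
  rw [Finset.sum_congr rfl h1, Finset.sum_comm]
  exact Finset.sum_congr rfl (fun J _ => (Finset.card_filter _ _).symm)

lemma Gf_nonneg (P : Finset ℕ) : 0 ≤ Gf P :=
  Finset.prod_nonneg (fun p _ => by positivity)

lemma Gf_anti {T S : Finset ℕ} (h : T ⊆ S) : Gf S ≤ Gf T := by
  rw [Gf, ← Finset.prod_sdiff h]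
  have h1 : ∏ p ∈ S \ T, (((p:ℝ)+1)/(2*p)) ≤ 1 := by
    apply Finset.prod_le_one (fun p _ => by positivity)
    intro p _
    rcases Nat.eq_zero_or_pos p with h0 | h0
    · subst h0; norm_num
    · rw [div_le_one (by positivity)]
      have : (1:ℝ) ≤ p := by exact_mod_cast h0
      linarith
  calc (∏ p ∈ S \ T, (((p:ℝ)+1)/(2*p))) * ∏ p ∈ T, (((p:ℝ)+1)/(2*p))
      ≤ 1 * ∏ p ∈ T, (((p:ℝ)+1)/(2*p)) :=
        mul_le_mul_of_nonneg_right h1 (Gf_nonneg T)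
    _ = Gf T := by rw [one_mul]; rfl

lemma Gf_bertrand (a : ℕ) (ha : 1 ≤ a) :
    Gf (Podd (2^(a+1))) ≤ (2/3) * Gf (Podd (2^a)) := by
  obtain ⟨q, hq, hq1, hq2⟩ := Nat.exists_prime_lt_and_le_two_mul (2^a) (by positivity)
  have hq3 : 3 ≤ q := by
    have : (2:ℕ) ≤ 2^a := by calc (2:ℕ) = 2^1 := rfl
                                _ ≤ 2^a := Nat.pow_le_pow_right (by omega) ha
    have := hq.two_le
    omega
  have hqodd : q % 2 = 1 := Nat.odd_iff.mp (hq.odd_of_ne_two (by omega))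
  have hqmem : q ∉ Podd (2^a) := by
    rw [Podd, Finset.mem_filter, Finset.mem_range]
    push_neg
    intro h; omega
  have hsub : insert q (Podd (2^a)) ⊆ Podd (2^(a+1)) := by
    intro p hp
    rw [Finset.mem_insert] at hp
    rw [Podd, Finset.mem_filter, Finset.mem_range]
    rcases hp with h | h
    · subst h
      refine ⟨?_, hq, hqodd⟩
      have : (2:ℕ)^(a+1) = 2 * 2^a := by ring
      omega
    · rw [Podd, Finset.mem_filter, Finset.mem_range] at h
      refine ⟨?_, h.2⟩
      have : (2:ℕ)^a ≤ 2^(a+1) := Nat.pow_le_pow_right (by omega) (by omega)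
      omega
  calc Gf (Podd (2^(a+1))) ≤ Gf (insert q (Podd (2^a))) := Gf_anti hsub
    _ = (((q:ℝ)+1)/(2*q)) * Gf (Podd (2^a)) := by rw [Gf, Finset.prod_insert hqmem]; rfl
    _ ≤ (2/3) * Gf (Podd (2^a)) := by
        apply mul_le_mul_of_nonneg_right ?_ (Gf_nonneg _)
        rw [div_le_div_iff₀ (by positivity) (by norm_num)]
        have : (3:ℝ) ≤ q := by exact_mod_cast hq3
        linarith

lemma Podd8 : Podd 8 = {3, 5, 7} := by decide
lemma Podd16 : Podd 16 = {3, 5, 7, 11, 13} := by decide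

lemma Gf8 : Gf (Podd 8) = 8/35 := by
  rw [Podd8, Gf]
  norm_num [Finset.prod_insert, Finset.mem_insert]

lemma Gf16 : Gf (Podd 16) = 48/715 := by
  rw [Podd16, Gf]
  norm_num [Finset.prod_insert, Finset.mem_insert]

lemma tele (A : ℕ) (hA : 3 ≤ A) :
    ∑ a ∈ Finset.Icc 4 A, Gf (Podd (2^a))
      ≤ 3 * (Gf (Podd (2^4)) - Gf (Podd (2^(A+1)))) := by
  induction A, hA using Nat.le_induction with
  | base =>
    rw [show Finset.Icc 4 3 = ∅ from rfl]
    simp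
  | succ A hA ih =>
    rw [show Finset.Icc 4 (A+1) = insert (A+1) (Finset.Icc 4 A) from by
      ext x; simp [Finset.mem_Icc]; omega]
    rw [Finset.sum_insert (by simp [Finset.mem_Icc])]
    have hb := Gf_bertrand (A+1) (by omega)
    have hg := Gf_nonneg (Podd (2^(A+1)))
    linarith

lemma tail_block (A : ℕ) (hA : 3 ≤ A) :
    ∑ a ∈ Finset.Icc 3 A, (1/2 : ℝ) * Gf (Podd (2^a)) ≤ 4/35 + 72/715 := by
  rw [show Finset.Icc 3 A = insert 3 (Finset.Icc 4 A) from by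
    ext x; simp [Finset.mem_Icc]; omega]
  rw [Finset.sum_insert (by simp [Finset.mem_Icc])]
  have h1 : ∑ a ∈ Finset.Icc 4 A, (1/2 : ℝ) * Gf (Podd (2^a))
      = (1/2) * ∑ a ∈ Finset.Icc 4 A, Gf (Podd (2^a)) := by
    rw [Finset.mul_sum]
  have h2 := tele A hA
  have h3 := Gf_nonneg (Podd (2^(A+1)))
  have h4 : Gf (Podd (2^3)) = 8/35 := by norm_num [Gf8]
  have h5 : Gf (Podd (2^4)) = 48/715 := by norm_num [Gf16]
  rw [h5] at h2
  rw [h1, h4]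
  linarith [h2, h3]

lemma termR_nonneg (J : ℕ) : 0 ≤ termR J := by
  rw [termR]
  have := Gf_nonneg (Pr J)
  positivity

lemma termR_eq_of (a J : ℕ) (ha : 3 ≤ a) (hJ1 : 2^a ≤ J) (hJ2 : J < 2^(a+1)) :
    termR J = (1/2^(a+1)) * Gf (Podd (2^a)) := by
  have hlog : Nat.log 2 J = a := Nat.log_eq_of_pow_le_of_lt_pow hJ1 hJ2
  have h8 : 8 ≤ J := by
    calc (8:ℕ) = 2^3 := rfl
    _ ≤ 2^a := Nat.pow_le_pow_right (by omega) ha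
    _ ≤ J := hJ1
  rw [termR, hlog, Pr, if_neg (by omega), if_neg (by omega), if_neg (by omega), hlog]

lemma tail_sum (N : ℕ) : ∑ J ∈ Finset.Icc 8 N, termR J ≤ 4/35 + 72/715 := by
  rcases lt_or_ge N 8 with hN | hN
  · rw [show Finset.Icc 8 N = ∅ from by ext x; simp [Finset.mem_Icc]; omega]
    norm_num
  · set A := Nat.log 2 N with hA
    have hA3 : 3 ≤ A := by
      rw [hA, show (3:ℕ) = Nat.log 2 8 from (Nat.log_eq_of_pow_le_of_lt_pow (by norm_num) (by norm_num)).symm]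
      exact Nat.log_mono_right hN
    have hsub : Finset.Icc 8 N ⊆ (Finset.Icc 3 A).biUnion (fun a => Finset.Ico (2^a) (2^(a+1))) := by
      intro J hJ
      rw [Finset.mem_Icc] at hJ
      rw [Finset.mem_biUnion]
      refine ⟨Nat.log 2 J, ?_, ?_⟩
      · rw [Finset.mem_Icc]
        constructor
        · rw [show (3:ℕ) = Nat.log 2 8 from (Nat.log_eq_of_pow_le_of_lt_pow (by norm_num) (by norm_num)).symm]
          exact Nat.log_mono_right hJ.1
        · exact Nat.log_mono_right hJ.2
      · rw [Finset.mem_Ico]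
        exact ⟨Nat.pow_log_le_self 2 (by omega), Nat.lt_pow_succ_log_self (by omega) J⟩
    have hdisj : (↑(Finset.Icc 3 A) : Set ℕ).PairwiseDisjoint
        (fun a => Finset.Ico (2^a) ((2:ℕ)^(a+1))) := by
      intro a _ b _ hab
      have key : ∀ x y : ℕ, x < y →
          Disjoint (Finset.Ico ((2:ℕ)^x) (2^(x+1))) (Finset.Ico ((2:ℕ)^y) (2^(y+1))) := by
        intro x y hxy
        rw [Finset.disjoint_left]
        intro u hu hu'
        rw [Finset.mem_Ico] at hu hu'
        have : (2:ℕ)^(x+1) ≤ 2^y := Nat.pow_le_pow_right (by omega) (by omega)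
        omega
      rcases lt_or_gt_of_ne hab with h | h
      · exact key a b h
      · exact (key b a h).symm
    calc ∑ J ∈ Finset.Icc 8 N, termR J
        ≤ ∑ J ∈ (Finset.Icc 3 A).biUnion (fun a => Finset.Ico (2^a) (2^(a+1))), termR J := by
          apply Finset.sum_le_sum_of_subset_of_nonneg hsub
          intro J _ _
          exact termR_nonneg J
      _ = ∑ a ∈ Finset.Icc 3 A, ∑ J ∈ Finset.Ico (2^a) (2^(a+1)), termR J :=
          Finset.sum_biUnion hdisj
      _ = ∑ a ∈ Finset.Icc 3 A, (1/2 : ℝ) * Gf (Podd (2^a)) := by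
          apply Finset.sum_congr rfl
          intro a ha
          rw [Finset.mem_Icc] at ha
          have : ∀ J ∈ Finset.Ico ((2:ℕ)^a) (2^(a+1)),
              termR J = (1/2^(a+1)) * Gf (Podd (2^a)) := by
            intro J hJ
            rw [Finset.mem_Ico] at hJ
            exact termR_eq_of a J ha.1 hJ.1 hJ.2
          rw [Finset.sum_congr rfl this, Finset.sum_const, Nat.card_Ico]
          have hcard : ((2:ℕ)^(a+1) - 2^a) = 2^a := by
            have : (2:ℕ)^(a+1) = 2 * 2^a := by ring
            omega
          rw [hcard, nsmul_eq_mul]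
          have hcast : (((2:ℕ)^a : ℕ) : ℝ) = 2^a := by push_cast; ring
          rw [hcast, pow_succ]
          have h2 : (0:ℝ) < 2^a := by positivity
          field_simp
      _ ≤ 4/35 + 72/715 := tail_block A hA3

lemma head_vals :
    termR 1 = 1/2 ∧ termR 2 = 1/4 ∧ termR 3 = 1/6 ∧ termR 4 = 1/12 ∧
    termR 5 = 1/20 ∧ termR 6 = 1/20 ∧ termR 7 = 1/20 := by
  have l1 : Nat.log 2 1 = 0 := Nat.log_eq_of_pow_le_of_lt_pow (by norm_num) (by norm_num)
  have l2 : Nat.log 2 2 = 1 := Nat.log_eq_of_pow_le_of_lt_pow (by norm_num) (by norm_num)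
  have l3 : Nat.log 2 3 = 1 := Nat.log_eq_of_pow_le_of_lt_pow (by norm_num) (by norm_num)
  have l4 : Nat.log 2 4 = 2 := Nat.log_eq_of_pow_le_of_lt_pow (by norm_num) (by norm_num)
  have l5 : Nat.log 2 5 = 2 := Nat.log_eq_of_pow_le_of_lt_pow (by norm_num) (by norm_num)
  have l6 : Nat.log 2 6 = 2 := Nat.log_eq_of_pow_le_of_lt_pow (by norm_num) (by norm_num)
  have l7 : Nat.log 2 7 = 2 := Nat.log_eq_of_pow_le_of_lt_pow (by norm_num) (by norm_num)
  refine ⟨?_, ?_, ?_, ?_, ?_, ?_, ?_⟩ <;>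
    simp only [termR, l1, l2, l3, l4, l5, l6, l7] <;>
    norm_num [Pr, Gf, Finset.prod_insert, Finset.mem_singleton]

lemma total_sum (N : ℕ) : ∑ J ∈ Finset.Icc 1 N, termR J ≤ 7/5 := by
  obtain ⟨h1, h2, h3, h4, h5, h6, h7⟩ := head_vals
  have hhead : ∑ J ∈ Finset.Icc 1 7, termR J = 23/20 := by
    rw [show Finset.Icc 1 7 = {1,2,3,4,5,6,7} from rfl]
    rw [Finset.sum_insert (by decide), Finset.sum_insert (by decide),
      Finset.sum_insert (by decide), Finset.sum_insert (by decide),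
      Finset.sum_insert (by decide), Finset.sum_insert (by decide),
      Finset.sum_singleton]
    rw [h1, h2, h3, h4, h5, h6, h7]
    norm_num
  rcases lt_or_ge N 8 with hN | hN
  · calc ∑ J ∈ Finset.Icc 1 N, termR J ≤ ∑ J ∈ Finset.Icc 1 7, termR J := by
          apply Finset.sum_le_sum_of_subset_of_nonneg
          · intro x hx; rw [Finset.mem_Icc] at *; omega
          · intro J _ _; exact termR_nonneg J
      _ ≤ 7/5 := by rw [hhead]; norm_num
  · have hsplit : Finset.Icc 1 N = Finset.Icc 1 7 ∪ Finset.Icc 8 N := by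
      ext x; simp [Finset.mem_Icc, Finset.mem_union]; omega
    have hdisj : Disjoint (Finset.Icc 1 7) (Finset.Icc 8 N) := by
      rw [Finset.disjoint_left]
      intro x hx hx'
      rw [Finset.mem_Icc] at hx hx'
      omega
    rw [hsplit, Finset.sum_union hdisj, hhead]
    have := tail_sum N
    linarith

noncomputable def CCn (n : ℕ) : ℝ := ∑ J ∈ Finset.Icc 1 (n+1), Cf (Pr J)

lemma CC_nonneg (n : ℕ) : 0 ≤ CCn n :=
  Finset.sum_nonneg (fun J _ => Finset.prod_nonneg (fun p _ => by positivity))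

lemma main_bound (n m : ℕ) : (lowdeg (Q n m) : ℝ) ≤ m * (7/5) + CCn n := by
  rw [lowdeg_Q_eq, sum_L_eq]
  push_cast
  have hle : ∀ J ∈ Finset.Icc 1 (n+1),
      ((((Finset.Icc 1 m).filter (fun s => J ≤ (Dp n s).natTrailingDegree)).card : ℝ))
        ≤ m * termR J + Cf (Pr J) := by
    intro J hJ
    rw [Finset.mem_Icc] at hJ
    have := layer_boundR n m J (Nat.log 2 J) hJ.1 hJ.2
      (Nat.pow_log_le_self 2 (by omega)) (Pr J) (Pr_spec J hJ.1)
    exact this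
  calc (∑ J ∈ Finset.Icc 1 (n+1),
        ((((Finset.Icc 1 m).filter (fun s => J ≤ (Dp n s).natTrailingDegree)).card : ℝ)))
      ≤ ∑ J ∈ Finset.Icc 1 (n+1), ((m : ℝ) * termR J + Cf (Pr J)) := Finset.sum_le_sum hle
    _ = (m : ℝ) * (∑ J ∈ Finset.Icc 1 (n+1), termR J) + CCn n := by
        rw [Finset.sum_add_distrib, Finset.mul_sum]
        rfl
    _ ≤ m * (7/5) + CCn n := by
        have := total_sum (n+1)
        have hm : (0:ℝ) ≤ m := by positivity
        nlinarith

theorem lowdeg_Q_limsup_rough_upper_bound (n : ℕ) (hn : 1 ≤ n) :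
    limsup (fun m : ℕ => (lowdeg (Q n m) : ℝ) / m) atTop ≤ (22 / 15 : ℝ) ∧
    (22 / 15 : ℝ) < (1.47 : ℝ) := by
  constructor
  · apply limsup_le_of_le
    · apply isCoboundedUnder_le_of_le atTop (x := 0)
      intro m
      positivity
    · filter_upwards [eventually_ge_atTop (max 1 (Nat.ceil (15 * CCn n)))] with m hm
      have hm1 : 1 ≤ m := le_trans (le_max_left _ _) hm
      have hmc : (15 * CCn n : ℝ) ≤ m := by
        have h1 : Nat.ceil (15 * CCn n) ≤ m := le_trans (le_max_right _ _) hm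
        have h2 := Nat.le_ceil (15 * CCn n)
        have h3 : ((Nat.ceil (15 * CCn n) : ℕ) : ℝ) ≤ m := by exact_mod_cast h1
        linarith
      have hmp : (0:ℝ) < m := by
        have : (1:ℝ) ≤ m := by exact_mod_cast hm1
        linarith
      calc (lowdeg (Q n m) : ℝ) / m ≤ ((m : ℝ) * (7/5) + CCn n) / m := by
            apply (div_le_div_iff_of_pos_right hmp).mpr (main_bound n m)
        _ = 7/5 + CCn n / m := by field_simp
        _ ≤ 7/5 + 1/15 := by
            have : CCn n / m ≤ 1/15 := by
              rw [div_le_iff₀ hmp]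
              linarith
            linarith
        _ = 22/15 := by norm_num
  · norm_num
end

section
/- For every integer n ≥ 1 and every integer i with 0 ≤ i ≤ n, set T_i = 2·lcm{2, 3, …, i+1} (with T_0 = 2). Then for every j with 0 ≤ j ≤ i, the coefficient of α^j in ε_{n+T_i} equals the coefficient of α^j in ε_n; i.e., the tuple of coefficients of α^0, α^1, …, α^i of ε_n is periodic in n with period T_i. In particular, the coefficients of α^q for all q ≤ 6 are periodic in n with period 840. -/
open Polynomial Filter

/-- `T_i = 2 · lcm{2, 3, …, i+1}` (so `T_0 = 2`). -/
def Tper (i : ℕ) : ℕ := 2 * (Finset.Icc 2 (i + 1)).lcm id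

lemma eps_coeff_zero (n : ℕ) : (eps n).coeff 0 = (-1 : ℤ) ^ n := by
  unfold eps
  rw [Polynomial.coeff_sub, Polynomial.coeff_C, if_pos rfl, Polynomial.finset_sum_coeff]
  rw [Finset.sum_eq_zero, sub_zero]
  intro b hb
  rw [Finset.mem_Icc] at hb
  rw [Polynomial.coeff_C_mul, Polynomial.coeff_X_pow, if_neg (by omega), mul_zero]

lemma eps_coeff_succ (n j : ℕ) (hj : 1 ≤ j) (hjn : j ≤ n) :
    (eps n).coeff j = -(-1 : ℤ) ^ (n / (j + 1)) := by
  unfold eps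
  rw [Polynomial.coeff_sub, Polynomial.coeff_C, if_neg (by omega),
    Polynomial.finset_sum_coeff, Finset.sum_eq_single (j + 1)]
  · rw [show j + 1 - 1 = j from rfl, Polynomial.coeff_C_mul, Polynomial.coeff_X_pow,
      if_pos rfl, mul_one, zero_sub]
  · intro b hb hne
    rw [Finset.mem_Icc] at hb
    rw [Polynomial.coeff_C_mul, Polynomial.coeff_X_pow, if_neg (by omega), mul_zero]
  · intro h
    exact absurd (Finset.mem_Icc.mpr (by omega)) h

lemma eps_parity (n j T : ℕ) (hd : (j + 1) ∣ T) (he : 2 ∣ T / (j + 1)) :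
    ((-1 : ℤ)) ^ ((n + T) / (j + 1)) = (-1) ^ (n / (j + 1)) := by
  obtain ⟨c, rfl⟩ := hd
  rw [Nat.add_mul_div_left _ _ (by omega : 0 < j + 1), pow_add]
  rw [Nat.mul_div_cancel_left _ (by omega : 0 < j + 1)] at he
  rw [(even_iff_two_dvd.mpr he).neg_one_pow, mul_one]

theorem eps_coeffs_periodic (n : ℕ) (hn : 1 ≤ n) (i : ℕ) (hi : i ≤ n) :
    (∀ j : ℕ, j ≤ i → (eps (n + Tper i)).coeff j = (eps n).coeff j) ∧
    (∀ q : ℕ, q ≤ 6 → q ≤ n → (eps (n + 840)).coeff q = (eps n).coeff q) := by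
  constructor
  · intro j hj
    rcases Nat.eq_zero_or_pos j with rfl | hj1
    · have hev : Even (Tper i) := by rw [Tper]; exact even_two_mul _
      rw [eps_coeff_zero, eps_coeff_zero, pow_add, hev.neg_one_pow, mul_one]
    · have hmem : j + 1 ∈ Finset.Icc 2 (i + 1) := Finset.mem_Icc.mpr (by omega)
      have hdL : (j + 1) ∣ (Finset.Icc 2 (i + 1)).lcm id := Finset.dvd_lcm hmem
      rw [eps_coeff_succ _ _ hj1 (by omega), eps_coeff_succ _ _ hj1 (by omega)]
      congr 1
      apply eps_parity
      · exact Dvd.dvd.mul_left hdL 2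
      · rw [Tper, Nat.mul_div_assoc 2 hdL]
        exact dvd_mul_right 2 _
  · intro q hq6 hqn
    rcases Nat.eq_zero_or_pos q with rfl | hq1
    · rw [eps_coeff_zero, eps_coeff_zero, pow_add,
        (by decide : Even 840).neg_one_pow, mul_one]
    · rw [eps_coeff_succ _ _ hq1 (by omega), eps_coeff_succ _ _ hq1 hqn]
      congr 1
      apply eps_parity
      · interval_cases q <;> decide
      · interval_cases q <;> decide
end

section
/- For all integers n ≥ 1 and s ≥ 1, the polynomial ε_{n+s} − ε_n is nonzero and satisfies 0 ≤ lowdeg(ε_{n+s} − ε_n) ≤ n + 1. Moreover, lowdeg(ε_{n+s} − ε_n) = 0 if s is odd, and lowdeg(ε_{n+s} − ε_n) ≥ 1 if s is even. -/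
open Polynomial Filter

lemma eps_coeff (n j : ℕ) (hj : 1 ≤ j) :
    (eps n).coeff j = if j ≤ n then -((-1 : ℤ) ^ (n / (j + 1))) else 0 := by
  unfold eps
  rw [coeff_sub, coeff_C, if_neg (by omega), finset_sum_coeff]
  by_cases h : j ≤ n
  · rw [if_pos h, Finset.sum_eq_single (j + 1)]
    · rw [coeff_C_mul, coeff_X_pow, if_pos (by omega)]
      ring
    · intro k hk hne
      simp only [Finset.mem_Icc] at hk
      rw [coeff_C_mul, coeff_X_pow, if_neg (by omega)]
      ring
    · intro habs
      exact absurd (Finset.mem_Icc.2 ⟨by omega, by omega⟩) habs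
  · rw [if_neg h, Finset.sum_eq_zero]
    · ring
    · intro k hk
      simp only [Finset.mem_Icc] at hk
      rw [coeff_C_mul, coeff_X_pow, if_neg (by omega)]
      ring

theorem eps_diff_lowdeg_bounds (n s : ℕ) (hn : 1 ≤ n) (hs : 1 ≤ s) :
    eps (n + s) - eps n ≠ 0 ∧
    lowdeg (eps (n + s) - eps n) ≤ n + 1 ∧
    (Odd s → lowdeg (eps (n + s) - eps n) = 0) ∧
    (Even s → 1 ≤ lowdeg (eps (n + s) - eps n)) := by
  set D := eps (n + s) - eps n with hD
  have hc : D.coeff (n + 1) = -((-1 : ℤ) ^ ((n + s) / (n + 2))) := by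
    rw [hD, coeff_sub, eps_coeff (n + s) (n + 1) (by omega),
      eps_coeff n (n + 1) (by omega), if_pos (by omega), if_neg (by omega)]
    ring
  have hcne : D.coeff (n + 1) ≠ 0 := by
    rw [hc]
    rcases Nat.even_or_odd ((n + s) / (n + 2)) with h | h
    · rw [Even.neg_one_pow h]; norm_num
    · rw [Odd.neg_one_pow h]; norm_num
  have hDne : D ≠ 0 := fun h => hcne (by rw [h, coeff_zero])
  have hle : lowdeg D ≤ n + 1 := natTrailingDegree_le_of_ne_zero hcne
  have hc0 : D.coeff 0 = (-1 : ℤ) ^ (n + s) - (-1 : ℤ) ^ n := by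
    rw [hD, coeff_sub, eps_coeff_zero, eps_coeff_zero]
  refine ⟨hDne, hle, ?_, ?_⟩
  · intro hodd
    have : D.coeff 0 ≠ 0 := by
      rw [hc0, pow_add, Odd.neg_one_pow hodd]
      rcases Nat.even_or_odd n with h | h
      · rw [Even.neg_one_pow h]; norm_num
      · rw [Odd.neg_one_pow h]; norm_num
    exact Nat.le_zero.mp (natTrailingDegree_le_of_ne_zero this)
  · intro heven
    have h0 : D.coeff 0 = 0 := by
      rw [hc0, pow_add, Even.neg_one_pow heven]; ring
    by_contra hlt
    have hz : D.natTrailingDegree = 0 := by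
      simpa [lowdeg] using Nat.lt_one_iff.mp (Nat.not_le.mp hlt)
    have htc : D.trailingCoeff ≠ 0 := trailingCoeff_nonzero_iff_nonzero.mpr hDne
    rw [trailingCoeff, hz, h0] at htc
    exact htc rfl
end

section
/- For every odd integer n ≥ 3, the period-doubling-cascade energies satisfy the exact two-particle degeneracy ε^PDC_n + ε^PDC_{n+1} = ε^PDC_{n−1} + ε^PDC_{n+2} as polynomials in α. (Thus for the PDC sequence the two-particle states (n,n+1) and (n−1,n+2) have equal on-site energies whenever n is odd.) -/
open Polynomial

/-- The period-doubling-cascade on-site energy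
`ε^PDC_n(α) = (1/2)[(−1)^n + Σ_{k=1}^{M(n)−1} (−1)^{j_k(n)} α^k]` in `ℚ[α]`,
where `j_k(n) = ⌊n/2^k⌋ mod 2` is the `k`-th binary digit of `n` and
`M(n) = 1 + ⌊log₂ n⌋` is the number of binary digits of `n`. -/
noncomputable def epsPDC (n : ℕ) : Polynomial ℚ :=
  C (1 / 2 : ℚ) *
    (C ((-1 : ℚ) ^ n) +
      ∑ k ∈ Finset.Icc 1 (Nat.log 2 n), C ((-1 : ℚ) ^ (n / 2 ^ k % 2)) * X ^ k)

lemma epsPDC_succ_even (m : ℕ) (hm : Even m) (h2 : 2 ≤ m) :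
    epsPDC (m + 1) = epsPDC m - 1 := by
  obtain ⟨r, hr⟩ := hm
  have hlog : Nat.log 2 (m + 1) = Nat.log 2 m := by
    apply Nat.log_eq_of_pow_le_of_lt_pow
    · exact le_trans (Nat.pow_log_le_self 2 (by omega)) (by omega)
    · have h1 : m < 2 ^ (Nat.log 2 m + 1) := Nat.lt_pow_succ_log_self one_lt_two m
      have h2 : (2 : ℕ) ∣ 2 ^ (Nat.log 2 m + 1) := dvd_pow_self 2 (Nat.succ_ne_zero _)
      obtain ⟨s, hs⟩ := h2
      omega
  have hdiv : ∀ k ∈ Finset.Icc 1 (Nat.log 2 m), (m + 1) / 2 ^ k = m / 2 ^ k := by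
    intro k hk
    simp only [Finset.mem_Icc] at hk
    apply Nat.succ_div_of_not_dvd
    intro hd
    have h2 : (2 : ℕ) ∣ 2 ^ k := dvd_pow_self 2 (by omega)
    obtain ⟨s, hs⟩ := h2.trans hd
    omega
  have hsum : ∑ k ∈ Finset.Icc 1 (Nat.log 2 (m + 1)),
        C ((-1 : ℚ) ^ ((m + 1) / 2 ^ k % 2)) * X ^ k
      = ∑ k ∈ Finset.Icc 1 (Nat.log 2 m),
        C ((-1 : ℚ) ^ (m / 2 ^ k % 2)) * X ^ k := by
    rw [hlog]
    exact Finset.sum_congr rfl fun k hk => by rw [hdiv k hk]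
  have hpow1 : ((-1 : ℚ)) ^ (m + 1) = -1 := by
    rw [pow_succ, Even.neg_one_pow ⟨r, hr⟩]; ring
  have hpow2 : ((-1 : ℚ)) ^ m = 1 := Even.neg_one_pow ⟨r, hr⟩
  unfold epsPDC
  rw [hsum, hpow1, hpow2]
  have hC : (C (1 / 2 : ℚ)) * C (-1 : ℚ) = C (1 / 2 : ℚ) * C (1 : ℚ) - 1 := by
    rw [← C_mul, ← C_mul, ← C_1 (R := ℚ), ← C_sub]
    norm_num
  linear_combination hC

theorem epsPDC_two_particle_degeneracy (n : ℕ) (hn : 3 ≤ n) (hodd : Odd n) :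
    epsPDC n + epsPDC (n + 1) = epsPDC (n - 1) + epsPDC (n + 2) := by
  obtain ⟨t, ht⟩ := hodd
  have h1 : n = 2 * t + 1 := by omega
  subst h1
  have e1 : 2 * t + 1 - 1 = 2 * t := by omega
  have e2 : 2 * t + 1 + 2 = (2 * t + 2) + 1 := by omega
  rw [e1, e2,
    epsPDC_succ_even (2 * t) ⟨t, by ring⟩ (by omega),
    epsPDC_succ_even (2 * t + 2) ⟨t + 1, by ring⟩ (by omega)]
  ring
end
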